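/- arXiv:2109.08923 — 11 statements merged into one kernel-verified Lean document; each statement's English description precedes it below -/
import Mathlib

section
/- Let μ > 0 and let f : ℝ → ℝ be a function such that for every positive integrable random variable X with E[X] ≤ μ one has f(X) ≥ 0 almost surely and E[f(X)] ≤ 1. Then there exists b with 0 ≤ b·μ ≤ 1 such that f(t) ≤ (1 − b·μ) + b·t for all t ≥ 0. -/
/-!
Testing the hypothesis on the Dirac masses at `x ∈ [0, μ]` gives `0 ≤ f x ≤ 1`, and on the
two-point law on `{x, y}`, `0 ≤ x < μ < y`, with mean exactly `μ` it says that the chord of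
the graph of `f` over `[x, y]` passes below `(μ, 1)`. Hence every slope `(f y - 1) / (y - μ)`
to the right of `μ` is at most every slope `(1 - f x) / (μ - x)` to the left of it, and the
infimum `b` of the latter is the slope of an affine majorant through `(μ, 1)`; evaluating at
`t = 0` with `f 0 ≥ 0` gives `b μ ≤ 1`.
-/

open MeasureTheory Set

noncomputable def twoPointMeasure (p x y : ℝ) : Measure ℝ :=
  ENNReal.ofReal p • Measure.dirac x + ENNReal.ofReal (1 - p) • Measure.dirac y

section TwoPointMeasure

variable {p : ℝ} (x y : ℝ)

theorem isProbabilityMeasure_twoPointMeasure (hp₀ : 0 ≤ p) (hp₁ : p ≤ 1) :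
    IsProbabilityMeasure (twoPointMeasure p x y) := by
  constructor
  simp only [twoPointMeasure, Measure.add_apply, Measure.smul_apply, measure_univ, smul_eq_mul,
    mul_one]
  rw [← ENNReal.ofReal_add hp₀ (sub_nonneg.2 hp₁), add_sub_cancel, ENNReal.ofReal_one]

theorem integrable_twoPointMeasure (g : ℝ → ℝ) : Integrable g (twoPointMeasure p x y) :=
  ((integrable_dirac enorm_lt_top).smul_measure ENNReal.ofReal_ne_top).add_measure
    ((integrable_dirac enorm_lt_top).smul_measure ENNReal.ofReal_ne_top)

theorem integral_twoPointMeasure (hp₀ : 0 ≤ p) (hp₁ : p ≤ 1) (g : ℝ → ℝ) :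
    ∫ z, g z ∂twoPointMeasure p x y = p * g x + (1 - p) * g y := by
  rw [twoPointMeasure, integral_add_measure
      ((integrable_dirac enorm_lt_top).smul_measure ENNReal.ofReal_ne_top)
      ((integrable_dirac enorm_lt_top).smul_measure ENNReal.ofReal_ne_top),
    integral_smul_measure, integral_smul_measure, integral_dirac, integral_dirac,
    ENNReal.toReal_ofReal hp₀, ENNReal.toReal_ofReal (sub_nonneg.2 hp₁), smul_eq_mul,
    smul_eq_mul]

theorem ae_twoPointMeasure_iff (hp₀ : 0 < p) (hp₁ : p < 1) {Q : ℝ → Prop} :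
    (∀ᵐ z ∂twoPointMeasure p x y, Q z) ↔ Q x ∧ Q y := by
  rw [twoPointMeasure, ae_add_measure_iff,
    Measure.ae_ennreal_smul_measure_iff (ENNReal.ofReal_pos.2 hp₀).ne',
    Measure.ae_ennreal_smul_measure_iff (ENNReal.ofReal_pos.2 (sub_pos.2 hp₁)).ne',
    ae_dirac_eq, ae_dirac_eq, Filter.eventually_pure, Filter.eventually_pure]

end TwoPointMeasure

theorem exists_affine_majorant_of_chord_le {f : ℝ → ℝ} {a μ c : ℝ} (ha : a < μ)
    (hle : ∀ x ∈ Icc a μ, f x ≤ c)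
    (hchord : ∀ x ∈ Ico a μ, ∀ y ∈ Ioi μ, (y - μ) * f x + (μ - x) * f y ≤ (y - x) * c) :
    ∃ b, 0 ≤ b ∧ ∀ t, a ≤ t → f t ≤ c + b * (t - μ) := by
  set T := (fun x ↦ (c - f x) / (μ - x)) '' Ico a μ
  have hT : T.Nonempty := ⟨_, mem_image_of_mem _ (left_mem_Ico.2 ha)⟩
  have hT₀ : ∀ s ∈ T, 0 ≤ s := by
    rintro _ ⟨x, hx, rfl⟩
    exact div_nonneg (sub_nonneg.2 (hle x (Ico_subset_Icc_self hx)))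
      (sub_nonneg.2 hx.2.le)
  refine ⟨sInf T, le_csInf hT hT₀, fun t ht ↦ ?_⟩
  rcases lt_trichotomy t μ with htμ | rfl | hμt
  · have hb := csInf_le ⟨0, hT₀⟩ (mem_image_of_mem _ ⟨ht, htμ⟩)
    rw [le_div_iff₀ (sub_pos.2 htμ)] at hb
    linarith
  · simpa using hle t ⟨ht, le_rfl⟩
  · have hb : (f t - c) / (t - μ) ≤ sInf T := by
      refine le_csInf hT ?_
      rintro _ ⟨x, hx, rfl⟩
      rw [div_le_div_iff₀ (sub_pos.2 hμt) (sub_pos.2 hx.2)]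
      linarith [hchord x hx t hμt]
    rw [div_le_iff₀ (sub_pos.2 hμt)] at hb
    linarith

def IsFactorUnderMeanBound (μ : ℝ) (f : ℝ → ℝ) : Prop :=
  ∀ P : Measure ℝ, IsProbabilityMeasure P →
    (∀ᵐ x ∂P, 0 ≤ x) → Integrable (fun x : ℝ => x) P → ∫ x, x ∂P ≤ μ →
    (∀ᵐ x ∂P, 0 ≤ f x) ∧ Integrable f P ∧ ∫ x, f x ∂P ≤ 1

namespace IsFactorUnderMeanBound

variable {μ : ℝ} {f : ℝ → ℝ}

theorem twoPoint (hf : IsFactorUnderMeanBound μ f) {p x y : ℝ} (hp₀ : 0 < p) (hp₁ : p < 1)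
    (hx : 0 ≤ x) (hy : 0 ≤ y) (hmean : p * x + (1 - p) * y ≤ μ) :
    (0 ≤ f x ∧ 0 ≤ f y) ∧ p * f x + (1 - p) * f y ≤ 1 := by
  obtain ⟨hnonneg, -, hint⟩ := hf (twoPointMeasure p x y)
    (isProbabilityMeasure_twoPointMeasure x y hp₀.le hp₁.le)
    ((ae_twoPointMeasure_iff x y hp₀ hp₁).2 ⟨hx, hy⟩) (integrable_twoPointMeasure x y _)
    (by rwa [integral_twoPointMeasure x y hp₀.le hp₁.le])
  rw [integral_twoPointMeasure x y hp₀.le hp₁.le] at hint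
  exact ⟨(ae_twoPointMeasure_iff x y hp₀ hp₁).1 hnonneg, hint⟩

theorem mem_Icc (hf : IsFactorUnderMeanBound μ f) {x : ℝ} (hx : x ∈ Icc 0 μ) :
    f x ∈ Icc 0 1 := by
  obtain ⟨⟨hfx, -⟩, hsum⟩ := hf.twoPoint (p := 1 / 2) (by norm_num) (by norm_num) hx.1 hx.1
    (by linarith [hx.2])
  exact ⟨hfx, by linarith⟩

theorem chord_le (hf : IsFactorUnderMeanBound μ f) {x y : ℝ} (hx : 0 ≤ x) (hxμ : x < μ)
    (hμy : μ < y) : (y - μ) * f x + (μ - x) * f y ≤ y - x := by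
  have hxy : 0 < y - x := by linarith
  set p := (y - μ) / (y - x)
  have hp : p * (y - x) = y - μ := div_mul_cancel₀ _ hxy.ne'
  have hsum := (hf.twoPoint (div_pos (by linarith) hxy) ((div_lt_one hxy).2 (by linarith)) hx
    (by linarith) (by linear_combination -hp : p * x + (1 - p) * y = μ).le).2
  calc (y - μ) * f x + (μ - x) * f y = (y - x) * (p * f x + (1 - p) * f y) := by
        linear_combination (f y - f x) * hp
    _ ≤ y - x := mul_le_of_le_one_right hxy.le hsum

end IsFactorUnderMeanBound

/-- If `μ > 0` and `f : ℝ → ℝ` is such that for every positive integrable random variable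
`X` (equivalently, every probability distribution `P` on `ℝ` concentrated on `[0,∞)` with
integrable identity) with `E[X] ≤ μ` one has `f(X) ≥ 0` a.s. and `E[f(X)] ≤ 1`, then there
exists `b` with `0 ≤ b·μ ≤ 1` such that `f(t) ≤ (1 − b·μ) + b·t` for all `t ≥ 0`. -/
theorem factor_dominated_by_affine
    (μ : ℝ) (hμ : 0 < μ) (f : ℝ → ℝ)
    (hf : ∀ P : Measure ℝ, IsProbabilityMeasure P →
      (∀ᵐ x ∂P, 0 ≤ x) → Integrable (fun x : ℝ => x) P → ∫ x, x ∂P ≤ μ →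
      (∀ᵐ x ∂P, 0 ≤ f x) ∧ Integrable f P ∧ ∫ x, f x ∂P ≤ 1) :
    ∃ b : ℝ, 0 ≤ b * μ ∧ b * μ ≤ 1 ∧ ∀ t : ℝ, 0 ≤ t → f t ≤ (1 - b * μ) + b * t := by
  have hf : IsFactorUnderMeanBound μ f := hf
  obtain ⟨b, hb, hmaj⟩ := exists_affine_majorant_of_chord_le hμ (c := 1)
    (fun x hx ↦ (hf.mem_Icc hx).2)
    fun x hx y hy ↦ by rw [mul_one]; exact hf.chord_le hx.1 hx.2 hy
  have hf₀ := (hf.mem_Icc ⟨le_rfl, hμ.le⟩).1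
  exact ⟨b, by positivity, by linarith [hmaj 0 le_rfl],
    fun t ht ↦ by linarith [hmaj t ht]⟩
end

section
/- Let μ > 0, let X be an integrable random variable with X ≥ 0 almost surely and E[X] ≤ μ, and let X_1, X_2, … be an i.i.d. sample of X. Let F_0 be the trivial σ-algebra and F_k = σ(X_1, …, X_k) for k ≥ 1. Let (c_k)_{k≥1} be a predictable process with values in [0,1], i.e., c_k is F_{k−1}-measurable for each k. Define M_0 = 1 and M_k = M_{k−1} · ((1 − c_k) + c_k · X_k/μ). Then {M_k}_{k≥0} is a nonnegative supermartingale with respect to {F_k}_{k≥0}, with E[M_k] ≤ 1 for all k. -/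
open MeasureTheory ProbabilityTheory

/-!
Conditionally on `ℱ k`, the factor `(1 - c k) + c k · X k / μ` is affine in `X k` with
`ℱ k`-measurable coefficients, and `X k` is independent of `ℱ k`. Pulling the coefficients out of
the conditional expectation gives `E[M (k+1) | ℱ k] = M k · ((1 - c k) + c k · E[X] / μ) ≤ M k`,
where `M k ≥ 0` because `X ≥ 0` and `c k ∈ [0, 1]` make every factor nonnegative.
-/

theorem one_sub_add_mul_nonneg {c y : ℝ} (hc : c ∈ Set.Icc (0 : ℝ) 1) (hy : 0 ≤ y) :
    0 ≤ (1 - c) + c * y := by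
  nlinarith [hc.2, mul_nonneg hc.1 hy]

namespace MeasureTheory

theorem Supermartingale.integral_le {Ω ι : Type*} {mΩ : MeasurableSpace Ω} {P : Measure Ω}
    [Preorder ι] {ℱ : Filtration ι mΩ} [SigmaFiniteFiltration P ℱ] {f : ι → Ω → ℝ}
    (hf : Supermartingale f ℱ P) {i j : ι} (hij : i ≤ j) :
    ∫ ω, f j ω ∂P ≤ ∫ ω, f i ω ∂P := by
  simpa using hf.setIntegral_le hij MeasurableSet.univ

end MeasureTheory

namespace ProbabilityTheory

variable {Ω : Type*} {mΩ : MeasurableSpace Ω} {P : Measure Ω}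

theorem condExp_mul_ae_eq_of_indep [IsFiniteMeasure P] {m : MeasurableSpace Ω} (hm : m ≤ mΩ)
    {f g : Ω → ℝ} (hf : StronglyMeasurable[m] f) (hg : Measurable[mΩ] g)
    (hindep : Indep m (MeasurableSpace.comap g inferInstance) P)
    (hfg : Integrable (f * g) P) (hg_int : Integrable g P) :
    P[f * g | m] =ᵐ[P] fun ω => f ω * ∫ ω', g ω' ∂P := by
  filter_upwards [condExp_mul_of_stronglyMeasurable_left hf hfg hg_int,
    condExp_indep_eq hg.comap_le hm (Measurable.of_comap_le le_rfl).stronglyMeasurable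
      hindep.symm] with ω hmul hconst
  rw [hmul, Pi.mul_apply, hconst]

theorem iIndepFun.indep_iSup_range_comap {β : Type*} [MeasurableSpace β] {X : ℕ → Ω → β}
    (hX : ∀ i, Measurable (X i)) (h : iIndepFun X P) (k : ℕ) :
    Indep (⨆ i ∈ Finset.range k, MeasurableSpace.comap (X i) inferInstance)
      (MeasurableSpace.comap (X k) inferInstance) P := by
  simpa using indep_iSup_of_disjoint (fun i => (hX i).comap_le)
    ((iIndepFun_iff_iIndep _ _ _).1 h) (S := (Finset.range k : Set ℕ)) (T := {k})
    (Set.disjoint_singleton_right.2 (by simp))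

section BettingStep

variable {W C Y : Ω → ℝ}

theorem mul_one_sub_add_mul_eq (W C Y : Ω → ℝ) :
    (fun ω => W ω * ((1 - C ω) + C ω * Y ω)) = W * (1 - C) + C * W * Y := by
  ext ω
  simp only [Pi.add_apply, Pi.mul_apply, Pi.sub_apply, Pi.one_apply]
  ring

theorem integrable_mul_one_sub_of_mem_Icc (hW : Integrable W P) (hC : AEStronglyMeasurable C P)
    (hC01 : ∀ ω, C ω ∈ Set.Icc (0 : ℝ) 1) : Integrable (W * (1 - C)) P :=
  hW.mul_bdd (aestronglyMeasurable_const.sub hC) (c := 1) <| .of_forall fun ω => by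
    rw [Pi.sub_apply, Pi.one_apply, Real.norm_of_nonneg (sub_nonneg.2 (hC01 ω).2)]
    linarith [(hC01 ω).1]

theorem integrable_mul_of_mem_Icc (hW : Integrable W P) (hC : AEStronglyMeasurable C P)
    (hC01 : ∀ ω, C ω ∈ Set.Icc (0 : ℝ) 1) : Integrable (C * W) P :=
  hW.bdd_mul hC (c := 1) <| .of_forall fun ω => by
    rw [Real.norm_of_nonneg (hC01 ω).1]
    exact (hC01 ω).2

variable {m : MeasurableSpace Ω}

theorem integrable_mul_mul_of_indep (hm : m ≤ mΩ) (hW : StronglyMeasurable[m] W)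
    (hW_int : Integrable W P) (hC : StronglyMeasurable[m] C)
    (hC01 : ∀ ω, C ω ∈ Set.Icc (0 : ℝ) 1)
    (hY_indep : Indep m (MeasurableSpace.comap Y inferInstance) P) (hY_int : Integrable Y P) :
    Integrable (C * W * Y) P :=
  ((IndepFun_iff_Indep _ _ _).2
    (indep_of_indep_of_le_left hY_indep (hC.mul hW).measurable.comap_le)).integrable_mul
    (integrable_mul_of_mem_Icc hW_int (hC.mono hm).aestronglyMeasurable hC01) hY_int

theorem integrable_mul_one_sub_add_mul (hm : m ≤ mΩ) (hW : StronglyMeasurable[m] W)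
    (hW_int : Integrable W P) (hC : StronglyMeasurable[m] C)
    (hC01 : ∀ ω, C ω ∈ Set.Icc (0 : ℝ) 1)
    (hY_indep : Indep m (MeasurableSpace.comap Y inferInstance) P) (hY_int : Integrable Y P) :
    Integrable (fun ω => W ω * ((1 - C ω) + C ω * Y ω)) P := by
  rw [mul_one_sub_add_mul_eq]
  exact (integrable_mul_one_sub_of_mem_Icc hW_int (hC.mono hm).aestronglyMeasurable hC01).add
    (integrable_mul_mul_of_indep hm hW hW_int hC hC01 hY_indep hY_int)

theorem condExp_mul_one_sub_add_mul_ae_le [IsFiniteMeasure P] (hm : m ≤ mΩ)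
    (hW : StronglyMeasurable[m] W) (hW_int : Integrable W P) (hW_nonneg : 0 ≤ᵐ[P] W)
    (hC : StronglyMeasurable[m] C) (hC01 : ∀ ω, C ω ∈ Set.Icc (0 : ℝ) 1)
    (hY : Measurable[mΩ] Y) (hY_indep : Indep m (MeasurableSpace.comap Y inferInstance) P)
    (hY_int : Integrable Y P) (hY_mean : ∫ ω, Y ω ∂P ≤ 1) :
    P[fun ω => W ω * ((1 - C ω) + C ω * Y ω) | m] ≤ᵐ[P] W := by
  have hA_int :=
    integrable_mul_one_sub_of_mem_Icc hW_int (hC.mono hm).aestronglyMeasurable hC01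
  have hBY_int := integrable_mul_mul_of_indep hm hW hW_int hC hC01 hY_indep hY_int
  rw [mul_one_sub_add_mul_eq]
  filter_upwards [condExp_add hA_int hBY_int m,
    condExp_mul_ae_eq_of_indep hm (hC.mul hW) hY hY_indep hBY_int hY_int, hW_nonneg]
    with ω hadd hpull hWω
  rw [hadd, Pi.add_apply, hpull,
    condExp_of_stronglyMeasurable hm (hW.mul (stronglyMeasurable_one.sub hC)) hA_int]
  simp only [Pi.mul_apply, Pi.sub_apply, Pi.one_apply, Pi.zero_apply] at hWω ⊢
  have hbet := mul_le_mul_of_nonneg_left hY_mean (mul_nonneg (hC01 ω).1 hWω)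
  linarith

end BettingStep

/-- `M` is the wealth of a gambler who stakes the fraction `c k` of it on the payoff `Y k`. -/
def IsBettingWealth (c Y M : ℕ → Ω → ℝ) : Prop :=
  ∀ k ω, M (k + 1) ω = M k ω * ((1 - c k ω) + c k ω * Y k ω)

namespace IsBettingWealth

variable {ℱ : Filtration ℕ mΩ} {c Y M : ℕ → Ω → ℝ}

theorem succ_eq (hM : IsBettingWealth c Y M) (k : ℕ) :
    M (k + 1) = fun ω => M k ω * ((1 - c k ω) + c k ω * Y k ω) :=
  funext (hM k)

theorem measurable (hM : IsBettingWealth c Y M) (hc : ∀ k, Measurable[ℱ k] (c k))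
    (hY : ∀ k, Measurable[ℱ (k + 1)] (Y k)) (hM0 : Measurable[ℱ 0] (M 0)) (k : ℕ) :
    Measurable[ℱ k] (M k) := by
  induction k with
  | zero => exact hM0
  | succ k ih =>
    have hc' := (hc k).mono (ℱ.mono k.le_succ) le_rfl
    rw [hM.succ_eq]
    exact (ih.mono (ℱ.mono k.le_succ) le_rfl).mul
      ((measurable_const.sub hc').add (hc'.mul (hY k)))

theorem ae_nonneg (hM : IsBettingWealth c Y M) (hc01 : ∀ k ω, c k ω ∈ Set.Icc (0 : ℝ) 1)
    (hY : ∀ k, 0 ≤ᵐ[P] Y k) (hM0 : 0 ≤ᵐ[P] M 0) (k : ℕ) : 0 ≤ᵐ[P] M k := by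
  induction k with
  | zero => exact hM0
  | succ k ih =>
    filter_upwards [ih, hY k] with ω hMω hYω
    rw [hM k ω]
    exact mul_nonneg hMω (one_sub_add_mul_nonneg (hc01 k ω) hYω)

theorem integrable (hM : IsBettingWealth c Y M) (hc : ∀ k, Measurable[ℱ k] (c k))
    (hc01 : ∀ k ω, c k ω ∈ Set.Icc (0 : ℝ) 1) (hY : ∀ k, Measurable[ℱ (k + 1)] (Y k))
    (hY_indep : ∀ k, Indep (ℱ k) (MeasurableSpace.comap (Y k) inferInstance) P)
    (hY_int : ∀ k, Integrable (Y k) P) (hM0 : Measurable[ℱ 0] (M 0))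
    (hM0_int : Integrable (M 0) P) (k : ℕ) : Integrable (M k) P := by
  induction k with
  | zero => exact hM0_int
  | succ k ih =>
    rw [hM.succ_eq]
    exact integrable_mul_one_sub_add_mul (ℱ.le k) (hM.measurable hc hY hM0 k).stronglyMeasurable
      ih (hc k).stronglyMeasurable (hc01 k) (hY_indep k) (hY_int k)

theorem supermartingale [IsFiniteMeasure P] (hM : IsBettingWealth c Y M)
    (hc : ∀ k, Measurable[ℱ k] (c k)) (hc01 : ∀ k ω, c k ω ∈ Set.Icc (0 : ℝ) 1)
    (hY : ∀ k, Measurable[ℱ (k + 1)] (Y k))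
    (hY_indep : ∀ k, Indep (ℱ k) (MeasurableSpace.comap (Y k) inferInstance) P)
    (hY_int : ∀ k, Integrable (Y k) P) (hY_nonneg : ∀ k, 0 ≤ᵐ[P] Y k)
    (hY_mean : ∀ k, ∫ ω, Y k ω ∂P ≤ 1) (hM0 : Measurable[ℱ 0] (M 0))
    (hM0_int : Integrable (M 0) P) (hM0_nonneg : 0 ≤ᵐ[P] M 0) :
    Supermartingale M ℱ P := by
  have hM_meas := hM.measurable hc hY hM0
  have hM_int := hM.integrable hc hc01 hY hY_indep hY_int hM0 hM0_int
  refine supermartingale_nat (fun k => (hM_meas k).stronglyMeasurable) hM_int fun k => ?_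
  rw [hM.succ_eq]
  exact condExp_mul_one_sub_add_mul_ae_le (ℱ.le k) (hM_meas k).stronglyMeasurable (hM_int k)
    (hM.ae_nonneg hc01 hY_nonneg hM0_nonneg k) (hc k).stronglyMeasurable (hc01 k)
    ((hY k).mono (ℱ.le _) le_rfl) (hY_indep k) (hY_int k) (hY_mean k)

end IsBettingWealth

end ProbabilityTheory

/-- Let `μ > 0`, let `X₀` be integrable with `X₀ ≥ 0` a.s. and `E[X₀] ≤ μ`, and let
`X 0, X 1, X 2, …` be an i.i.d. sample of `X₀` (here `X i` stands for the paper's `X_{i+1}`).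
Let `ℱ` be the natural filtration, `ℱ 0` trivial and `ℱ k = σ(X 0, …, X (k-1))`, and let
`c k` (the paper's `c_{k+1}`) be an `ℱ k`-measurable test parameter with values in `[0,1]`.
Define `M 0 = 1`, `M (k+1) = M k · ((1 − c k) + c k · X k / μ)`. Then `{M k}` is a nonnegative
supermartingale with respect to `ℱ`, and `E[M k] ≤ 1` for all `k`. -/
theorem test_supermartingale_of_iid_sample
    {Ω : Type*} {mΩ : MeasurableSpace Ω} (P : Measure Ω) [IsProbabilityMeasure P]
    (μ : ℝ) (hμ : 0 < μ)
    (X₀ : Ω → ℝ) (hX₀int : Integrable X₀ P) (hX₀pos : ∀ᵐ ω ∂P, 0 ≤ X₀ ω)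
    (hEX₀ : ∫ ω, X₀ ω ∂P ≤ μ)
    (X : ℕ → Ω → ℝ)
    (hindep : iIndepFun X P)
    (hident : ∀ i, IdentDistrib (X i) X₀ P P)
    (ℱ : Filtration ℕ mΩ)
    (hℱ : ∀ k, ℱ k = ⨆ i ∈ Finset.range k, MeasurableSpace.comap (X i) inferInstance)
    (c : ℕ → Ω → ℝ)
    (hc_pred : ∀ k, Measurable[ℱ k] (c k))
    (hc01 : ∀ k ω, c k ω ∈ Set.Icc (0 : ℝ) 1)
    (M : ℕ → Ω → ℝ)
    (hM0 : ∀ ω, M 0 ω = 1)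
    (hMrec : ∀ k ω, M (k + 1) ω = M k ω * ((1 - c k ω) + c k ω * X k ω / μ)) :
    Supermartingale M ℱ P ∧ (∀ k, ∀ᵐ ω ∂P, 0 ≤ M k ω) ∧ ∀ k, ∫ ω, M k ω ∂P ≤ 1 := by
  have hX_meas : ∀ k, Measurable[ℱ (k + 1)] (X k) := fun k => by
    rw [hℱ]
    exact Measurable.of_comap_le (le_iSup₂ (f := fun i (_ : i ∈ Finset.range (k + 1)) =>
      MeasurableSpace.comap (X i) inferInstance) k (by simp))
  set Y : ℕ → Ω → ℝ := fun k ω => X k ω / μ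
  have hM : IsBettingWealth c Y M := fun k ω => by rw [hMrec, mul_div_assoc]
  have hY_indep : ∀ k, Indep (ℱ k) (MeasurableSpace.comap (Y k) inferInstance) P := fun k => by
    rw [hℱ k]
    exact indep_of_indep_of_le_right
      (hindep.indep_iSup_range_comap (fun i => (hX_meas i).mono (ℱ.le _) le_rfl) k)
      ((Measurable.of_comap_le le_rfl).div_const μ).comap_le
  have hY_nonneg : ∀ k, 0 ≤ᵐ[P] Y k := fun k => by
    filter_upwards [(hident k).symm.ae_mem_snd measurableSet_Ici hX₀pos] with ω hω
    exact div_nonneg hω hμ.le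
  have hY_mean : ∀ k, ∫ ω, Y k ω ∂P ≤ 1 := fun k => by
    rw [integral_div, (hident k).integral_eq, div_le_one hμ]
    exact hEX₀
  have hM0_eq : M 0 = 1 := funext hM0
  have hM0_nonneg : 0 ≤ᵐ[P] M 0 := .of_forall fun ω => by simp [hM0]
  have hsuper : Supermartingale M ℱ P :=
    hM.supermartingale hc_pred hc01 (fun k => (hX_meas k).div_const μ) hY_indep
      (fun k => ((hident k).integrable_iff.2 hX₀int).div_const μ) hY_nonneg hY_mean
      (hM0_eq ▸ measurable_const) (hM0_eq ▸ integrable_const 1) hM0_nonneg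
  refine ⟨hsuper, hM.ae_nonneg hc01 hY_nonneg hM0_nonneg, fun k => ?_⟩
  calc ∫ ω, M k ω ∂P ≤ ∫ ω, M 0 ω ∂P := hsuper.integral_le k.zero_le
    _ = 1 := by simp [hM0_eq]
end

section
/- Let 0 < μ ≤ ν ≤ 1, let n ≥ 1 and 0 ≤ k ≤ n be integers, and let Z_1, Z_2, … be an i.i.d. sample of a Bernoulli random variable Z with success probability ν. Put S_i = Z_1 + ⋯ + Z_i, and define Y_0 = F(k; n, μ), Y_i = F(k − S_i; n − i, μ) for 1 ≤ i ≤ n, and Y_i = Y_n for i > n. Then {Y_i}_{i≥0} is a supermartingale with respect to the natural filtration of (Z_i); in particular, for every i with 1 ≤ i ≤ n and every integer s, ν·F(k − s − 1; n − i, μ) + (1 − ν)·F(k − s; n − i, μ) ≤ F(k − s; n − i + 1, μ). -/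
open MeasureTheory ProbabilityTheory

/-- The cumulative distribution function of the binomial distribution with parameters
`(n, p)`, evaluated at the integer `k`: `F(k; n, p) = Σ_{0 ≤ j ≤ k} C(n,j) p^j (1-p)^(n-j)`.
It vanishes for `k < 0` and equals `1` (for `p ∈ [0,1]`) when `k ≥ n`. -/
noncomputable def binCDF (k : ℤ) (n : ℕ) (p : ℝ) : ℝ :=
  ∑ j ∈ Finset.range (n + 1),
    if (j : ℤ) ≤ k then (n.choose j : ℝ) * p ^ j * (1 - p) ^ (n - j) else 0

/-!
Pascal's rule `F(t; m+1, μ) = μ F(t-1; m, μ) + (1-μ) F(t; m, μ)` together with monotonicity of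
`F` in `t` gives `ν F(t-1; m, μ) + (1-ν) F(t; m, μ) ≤ F(t; m+1, μ)` for `ν ≥ μ`. Since the next
step `Z i` is a Bernoulli(`ν`) variable independent of the past, the conditional expectation of
`Y (i+1)` given `ℱ i` is exactly the left-hand side at `t = k - S i`, `m = n - i - 1`, hence
at most `F(k - S i; n - i, μ) = Y i`.
-/

open Finset

noncomputable def binomialWeight (n : ℕ) (p : ℝ) (j : ℕ) : ℝ :=
  (n.choose j : ℝ) * p ^ j * (1 - p) ^ (n - j)

namespace binomialWeight

variable {n m j : ℕ} {p : ℝ}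

lemma nonneg (h0 : 0 ≤ p) (h1 : p ≤ 1) : 0 ≤ binomialWeight n p j := by
  unfold binomialWeight
  have : 0 ≤ 1 - p := by linarith
  positivity

lemma eq_zero_of_lt (h : n < j) : binomialWeight n p j = 0 := by
  simp [binomialWeight, Nat.choose_eq_zero_of_lt h]

lemma sum_range_eq_one : ∑ j ∈ range (n + 1), binomialWeight n p j = 1 := by
  have h := (add_pow p (1 - p) n).symm
  rw [add_sub_cancel, one_pow] at h
  exact (sum_congr rfl fun j _ => by rw [binomialWeight]; ring).trans h

lemma succ_zero : binomialWeight (m + 1) p 0 = (1 - p) * binomialWeight m p 0 := by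
  simp [binomialWeight, pow_succ']

lemma succ_succ :
    binomialWeight (m + 1) p (j + 1) =
      p * binomialWeight m p j + (1 - p) * binomialWeight m p (j + 1) := by
  rcases lt_trichotomy j m with hj | rfl | hj
  · obtain ⟨d, rfl⟩ := Nat.exists_eq_add_of_lt hj
    simp only [binomialWeight, Nat.choose_succ_succ', Nat.cast_add]
    rw [show j + d + 1 + 1 - (j + 1) = d + 1 by omega, show j + d + 1 - j = d + 1 by omega,
      show j + d + 1 - (j + 1) = d by omega]
    ring
  · simp [binomialWeight, Nat.choose_succ_self, pow_succ, mul_comm]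
  · have hj' : m < j + 1 := hj.trans j.lt_succ_self
    simp [binomialWeight, Nat.choose_eq_zero_of_lt hj, Nat.choose_eq_zero_of_lt hj',
      Nat.choose_eq_zero_of_lt (Nat.succ_lt_succ hj)]

end binomialWeight

lemma binCDF_eq_sum_range (k : ℤ) (n : ℕ) (p : ℝ) {N : ℕ} (hN : n + 1 ≤ N) :
    binCDF k n p = ∑ j ∈ range N, if (j : ℤ) ≤ k then binomialWeight n p j else 0 := by
  refine sum_subset (range_subset_range.2 hN) fun j _ hj => ?_
  rw [← binomialWeight, binomialWeight.eq_zero_of_lt (by simpa using hj), ite_self]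

lemma binCDF_succ (k : ℤ) (m : ℕ) (p : ℝ) :
    binCDF k (m + 1) p = p * binCDF (k - 1) m p + (1 - p) * binCDF k m p := by
  rw [binCDF_eq_sum_range k (m + 1) p le_rfl, binCDF_eq_sum_range (k - 1) m p le_rfl,
    binCDF_eq_sum_range k m p (N := m + 1 + 1) (by omega), sum_range_succ',
    sum_range_succ' (fun j => if (j : ℤ) ≤ k then binomialWeight m p j else 0),
    mul_sum, mul_add, mul_sum, ← add_assoc, ← sum_add_distrib]
  congr 1
  · refine sum_congr rfl fun j _ => ?_
    have : ((j + 1 : ℕ) : ℤ) ≤ k ↔ (j : ℤ) ≤ k - 1 := by omega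
    simp only [this]
    split_ifs <;> simp [binomialWeight.succ_succ]
  · split_ifs <;> simp [binomialWeight.succ_zero]

lemma binCDF_nonneg (k : ℤ) (n : ℕ) {p : ℝ} (h0 : 0 ≤ p) (h1 : p ≤ 1) : 0 ≤ binCDF k n p :=
  sum_nonneg fun _ _ => by split_ifs <;> [exact binomialWeight.nonneg h0 h1; rfl]

lemma binCDF_le_one (k : ℤ) (n : ℕ) {p : ℝ} (h0 : 0 ≤ p) (h1 : p ≤ 1) : binCDF k n p ≤ 1 :=
  calc binCDF k n p ≤ ∑ j ∈ range (n + 1), binomialWeight n p j :=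
        sum_le_sum fun _ _ => by split_ifs <;> [rfl; exact binomialWeight.nonneg h0 h1]
    _ = 1 := binomialWeight.sum_range_eq_one

lemma binCDF_sub_one_le (k : ℤ) (n : ℕ) {p : ℝ} (h0 : 0 ≤ p) (h1 : p ≤ 1) :
    binCDF (k - 1) n p ≤ binCDF k n p :=
  sum_le_sum fun _ _ => by
    split_ifs <;> first | rfl | omega | exact binomialWeight.nonneg h0 h1

lemma mul_binCDF_sub_one_add_le_binCDF_succ {μ ν : ℝ} (hμ : 0 ≤ μ) (hμν : μ ≤ ν) (hν : ν ≤ 1)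
    (t : ℤ) (m : ℕ) :
    ν * binCDF (t - 1) m μ + (1 - ν) * binCDF t m μ ≤ binCDF t (m + 1) μ := by
  have hmono := binCDF_sub_one_le t m hμ (hμν.trans hν)
  rw [binCDF_succ]
  linarith [mul_le_mul_of_nonneg_left hmono (sub_nonneg.2 hμν)]

lemma norm_binCDF_le_one (k : ℤ) (n : ℕ) {p : ℝ} (h0 : 0 ≤ p) (h1 : p ≤ 1) :
    ‖binCDF k n p‖ ≤ 1 := by
  rw [Real.norm_of_nonneg (binCDF_nonneg k n h0 h1)]
  exact binCDF_le_one k n h0 h1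

section Conditioning

variable {Ω : Type*} {m m' mΩ : MeasurableSpace Ω} {P : Measure Ω}

lemma integral_natCast_eq_measureReal_of_ae_le_one {X : Ω → ℕ} (hX : Measurable X)
    (h01 : ∀ᵐ ω ∂P, X ω ≤ 1) : ∫ ω, (X ω : ℝ) ∂P = P.real {ω | X ω = 1} := by
  rw [← integral_indicator_one (s := {ω | X ω = 1}) (hX (measurableSet_singleton 1))]
  refine integral_congr_ae ?_
  filter_upwards [h01] with ω hω
  interval_cases hXω : X ω <;> simp [Set.indicator, hXω]

lemma ProbabilityTheory.iIndepFun.indep_comap_biSup_range {β : Type*} [MeasurableSpace β]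
    {Z : ℕ → Ω → β} (hZ : ∀ i, Measurable (Z i)) (h : iIndepFun Z P) (i : ℕ) :
    Indep (MeasurableSpace.comap (Z i) inferInstance)
      (⨆ j ∈ range i, MeasurableSpace.comap (Z j) inferInstance) P := by
  have := indep_iSup_of_disjoint (fun j => (hZ j).comap_le) h
    (S := {i}) (T := (range i : Set ℕ)) (by simp)
  rwa [_root_.iSup_singleton] at this

variable [IsFiniteMeasure P]

lemma condExp_mul_ae_eq_mul_integral_of_indep (hm : m ≤ mΩ)
    (hm' : m' ≤ mΩ) {g f : Ω → ℝ} {C : ℝ} (hg : StronglyMeasurable[m] g) (hgC : ∀ ω, ‖g ω‖ ≤ C)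
    (hf : StronglyMeasurable[m'] f) (hfi : Integrable f P) (hind : Indep m' m P) :
    P[g * f | m] =ᵐ[P] fun ω => g ω * ∫ ω, f ω ∂P := by
  have hgf : Integrable (g * f) P :=
    hfi.bdd_mul (hg.mono hm).aestronglyMeasurable (ae_of_all _ hgC)
  filter_upwards [condExp_mul_of_stronglyMeasurable_left hg hgf hfi,
    condExp_indep_eq hm' hm hf hind] with ω h₁ h₂
  rw [h₁, Pi.mul_apply, h₂]

lemma condExp_comp_add_ae_eq_of_indep {X : Ω → ℕ} {T : Ω → ℤ} {h : ℤ → ℝ} {C : ℝ}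
    (hm : m ≤ mΩ) (hX : Measurable X) (h01 : ∀ᵐ ω ∂P, X ω ≤ 1)
    (hind : Indep (MeasurableSpace.comap X inferInstance) m P) (hT : Measurable[m] T)
    (hC : ∀ z, ‖h z‖ ≤ C) :
    P[fun ω => h (T ω + X ω) | m] =ᵐ[P] fun ω =>
      P.real {ω | X ω = 1} * h (T ω + 1) + (1 - P.real {ω | X ω = 1}) * h (T ω) := by
  set χ : Ω → ℝ := fun ω => (X ω : ℝ)
  set Δ : Ω → ℝ := fun ω => h (T ω + 1) - h (T ω)
  have hsplit : (fun ω => h (T ω + X ω)) =ᵐ[P] h ∘ T + Δ * χ := by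
    filter_upwards [h01] with ω hω
    interval_cases hXω : X ω <;> simp [Δ, χ, hXω]
  have hhT : StronglyMeasurable[m] (h ∘ T) := (Measurable.of_discrete.comp hT).stronglyMeasurable
  have hΔ : StronglyMeasurable[m] Δ :=
    ((Measurable.of_discrete (f := fun z => h (z + 1) - h z)).comp hT).stronglyMeasurable
  have hχ : StronglyMeasurable[MeasurableSpace.comap X inferInstance] χ :=
    (Measurable.of_discrete.comp (comap_measurable X)).stronglyMeasurable
  have hχint : Integrable χ P :=
    .of_bound (hχ.mono hX.comap_le).aestronglyMeasurable 1 (by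
      filter_upwards [h01] with ω hω
      simpa [χ] using hω)
  have hhTint : Integrable (h ∘ T) P :=
    .of_bound (hhT.mono hm).aestronglyMeasurable C (ae_of_all _ fun ω => hC (T ω))
  have hΔC : ∀ ω, ‖Δ ω‖ ≤ C + C := fun ω => (norm_sub_le _ _).trans (add_le_add (hC _) (hC _))
  have hΔχint : Integrable (Δ * χ) P :=
    hχint.bdd_mul (hΔ.mono hm).aestronglyMeasurable (ae_of_all _ hΔC)
  calc P[fun ω => h (T ω + X ω) | m]
      =ᵐ[P] P[h ∘ T | m] + P[Δ * χ | m] :=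
        (condExp_congr_ae hsplit).trans (condExp_add hhTint hΔχint m)
    _ =ᵐ[P] h ∘ T + fun ω => Δ ω * P.real {ω | X ω = 1} := by
        rw [condExp_of_stronglyMeasurable hm hhT hhTint]
        refine (condExp_mul_ae_eq_mul_integral_of_indep hm hX.comap_le hΔ hΔC hχ hχint hind).mono
          fun ω hω => ?_
        simp only [Pi.add_apply, hω, integral_natCast_eq_measureReal_of_ae_le_one hX h01, χ]
    _ = _ := by
        ext ω
        simp only [Pi.add_apply, Function.comp_apply, Δ]
        ring

end Conditioning

section RandomWalk

variable {Ω : Type*} {mΩ : MeasurableSpace Ω} {P : Measure Ω} {Z : ℕ → Ω → ℕ}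
  {ℱ : Filtration ℕ mΩ}

lemma measurable_of_lt_of_eq_biSup_range
    (hℱ : ∀ i, ℱ i = ⨆ j ∈ range i, MeasurableSpace.comap (Z j) inferInstance) {i j : ℕ}
    (hj : j < i) : Measurable[ℱ i] (Z j) :=
  measurable_iff_comap_le.2 <|
    (le_biSup (fun j => MeasurableSpace.comap (Z j) inferInstance) (mem_range.2 hj)).trans
      (hℱ i).ge

lemma measurable_sum_range_of_eq_biSup_range
    (hℱ : ∀ i, ℱ i = ⨆ j ∈ range i, MeasurableSpace.comap (Z j) inferInstance) (i : ℕ) :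
    Measurable[ℱ i] fun ω => ∑ j ∈ range i, (Z j ω : ℤ) :=
  Finset.measurable_sum _ fun _ hj =>
    Measurable.of_discrete.comp (measurable_of_lt_of_eq_biSup_range hℱ (mem_range.1 hj))

theorem supermartingale_comp_sum_range_min [IsFiniteMeasure P] (hindep : iIndepFun Z P)
    (hZ01 : ∀ i, ∀ᵐ ω ∂P, Z i ω ≤ 1) {ν : ℝ} (hZν : ∀ i, P.real {ω | Z i ω = 1} = ν)
    (hℱ : ∀ i, ℱ i = ⨆ j ∈ range i, MeasurableSpace.comap (Z j) inferInstance)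
    {φ : ℕ → ℤ → ℝ} {C : ℝ} (hφC : ∀ i z, ‖φ i z‖ ≤ C) (n : ℕ)
    (hφ : ∀ i < n, ∀ z, ν * φ (i + 1) (z + 1) + (1 - ν) * φ (i + 1) z ≤ φ i z) :
    Supermartingale (fun i ω => φ (min i n) (∑ j ∈ range (min i n), (Z j ω : ℤ))) ℱ P := by
  have hS := measurable_sum_range_of_eq_biSup_range hℱ
  have hZ (j : ℕ) : Measurable (Z j) :=
    (measurable_of_lt_of_eq_biSup_range hℱ (Nat.lt_succ_self j)).mono (ℱ.le (j + 1)) le_rfl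
  have hadapted : StronglyAdapted ℱ fun i ω => φ (min i n) (∑ j ∈ range (min i n), (Z j ω : ℤ)) :=
    fun i => ((Measurable.of_discrete (f := φ (min i n))).comp
      ((hS _).mono (ℱ.mono (min_le_left i n)) le_rfl)).stronglyMeasurable
  have hint (i : ℕ) :
      Integrable (fun ω => φ (min i n) (∑ j ∈ range (min i n), (Z j ω : ℤ))) P :=
    .of_bound ((hadapted i).mono (ℱ.le i)).aestronglyMeasurable C (ae_of_all _ fun _ => hφC _ _)
  refine supermartingale_nat hadapted hint fun i => ?_
  rcases lt_or_ge i n with hi | hi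
  · have hind : Indep (MeasurableSpace.comap (Z i) inferInstance) (ℱ i) P :=
      hℱ i ▸ iIndepFun.indep_comap_biSup_range hZ hindep i
    simp only [min_eq_left (Nat.succ_le_of_lt hi), min_eq_left hi.le, sum_range_succ]
    refine (condExp_comp_add_ae_eq_of_indep (ℱ.le i) (hZ i) (hZ01 i) hind (hS i)
      (hφC (i + 1))).trans_le (ae_of_all _ fun ω => ?_)
    rw [hZν]
    exact hφ i hi _
  · have hfrozen : (fun ω => φ (min (i + 1) n) (∑ j ∈ range (min (i + 1) n), (Z j ω : ℤ))) =
        fun ω => φ (min i n) (∑ j ∈ range (min i n), (Z j ω : ℤ)) := by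
      rw [min_eq_right hi, min_eq_right (hi.trans (Nat.le_succ i))]
    rw [hfrozen, condExp_of_stronglyMeasurable (ℱ.le i) (hadapted i) (hint i)]

end RandomWalk

theorem binomial_cdf_supermartingale_general
    {Ω : Type*} {mΩ : MeasurableSpace Ω} (P : Measure Ω) [IsProbabilityMeasure P]
    (μ ν : ℝ) (hμ : 0 < μ) (hμν : μ ≤ ν) (hν : ν ≤ 1)
    (n k : ℕ)
    (Z : ℕ → Ω → ℕ)
    (hindep : iIndepFun Z P)
    (hZ01 : ∀ i, ∀ᵐ ω ∂P, Z i ω ≤ 1)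
    (hZν : ∀ i, P {ω | Z i ω = 1} = ENNReal.ofReal ν)
    (ℱ : Filtration ℕ mΩ)
    (hℱ : ∀ m, ℱ m = ⨆ i ∈ Finset.range m, MeasurableSpace.comap (Z i) inferInstance)
    (Y : ℕ → Ω → ℝ)
    (hY0 : ∀ ω, Y 0 ω = binCDF (k : ℤ) n μ)
    (hY : ∀ i, 1 ≤ i → i ≤ n → ∀ ω,
      Y i ω = binCDF ((k : ℤ) - ∑ j ∈ Finset.range i, (Z j ω : ℤ)) (n - i) μ)
    (hYtail : ∀ i, n < i → ∀ ω, Y i ω = Y n ω) :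
    Supermartingale Y ℱ P ∧
      ∀ i, 1 ≤ i → i ≤ n → ∀ s : ℤ,
        ν * binCDF ((k : ℤ) - s - 1) (n - i) μ + (1 - ν) * binCDF ((k : ℤ) - s) (n - i) μ ≤
          binCDF ((k : ℤ) - s) (n - i + 1) μ := by
  have key := mul_binCDF_sub_one_add_le_binCDF_succ hμ.le hμν hν
  have hY_le {i : ℕ} (hi : i ≤ n) (ω : Ω) :
      Y i ω = binCDF (k - ∑ j ∈ range i, (Z j ω : ℤ)) (n - i) μ := by
    rcases Nat.eq_zero_or_pos i with rfl | hi0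
    · simpa using hY0 ω
    · exact hY i hi0 hi ω
  have hY_min : Y = fun i ω => binCDF (k - ∑ j ∈ range (min i n), (Z j ω : ℤ)) (n - min i n) μ := by
    ext i ω
    rcases le_or_gt i n with hi | hi
    · rw [min_eq_left hi, hY_le hi]
    · rw [min_eq_right hi.le, hYtail i hi, hY_le le_rfl]
  have hZν' (i : ℕ) : P.real {ω | Z i ω = 1} = ν := by
    rw [measureReal_def, hZν, ENNReal.toReal_ofReal (hμ.le.trans hμν)]
  refine ⟨?_, fun i _ _ s => key _ _⟩
  rw [hY_min]
  refine supermartingale_comp_sum_range_min hindep hZ01 hZν' hℱ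
    (φ := fun i z => binCDF (k - z) (n - i) μ)
    (fun _ _ => norm_binCDF_le_one _ _ hμ.le (hμν.trans hν)) n fun i hi z => ?_
  rw [show n - i = n - (i + 1) + 1 by omega, sub_add_eq_sub_sub]
  exact key _ _

/-- Let `0 < μ ≤ ν ≤ 1`, `n ≥ 1`, `0 ≤ k ≤ n`, and let `Z 0, Z 1, …` be an i.i.d. sample of a
Bernoulli random variable with success probability `ν` (here `Z i` stands for the paper's
`Z_{i+1}`).  With `S i = Z 0 + ⋯ + Z (i-1)`, define `Y 0 = F(k; n, μ)`,
`Y i = F(k − S i; n − i, μ)` for `1 ≤ i ≤ n` and `Y i = Y n` for `i > n`.  Then `{Y i}` is a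
supermartingale with respect to the natural filtration of `(Z i)`; in particular for every
`1 ≤ i ≤ n` and every integer `s`,
`ν·F(k−s−1; n−i, μ) + (1−ν)·F(k−s; n−i, μ) ≤ F(k−s; n−i+1, μ)`. -/
theorem binomial_cdf_supermartingale
    {Ω : Type*} {mΩ : MeasurableSpace Ω} (P : Measure Ω) [IsProbabilityMeasure P]
    (μ ν : ℝ) (hμ : 0 < μ) (hμν : μ ≤ ν) (hν : ν ≤ 1)
    (n k : ℕ) (hn : 1 ≤ n) (hk : k ≤ n)
    (Z : ℕ → Ω → ℕ)
    (hindep : iIndepFun Z P)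
    (hZ01 : ∀ i, ∀ᵐ ω ∂P, Z i ω ≤ 1)
    (hZν : ∀ i, P {ω | Z i ω = 1} = ENNReal.ofReal ν)
    (ℱ : Filtration ℕ mΩ)
    (hℱ : ∀ m, ℱ m = ⨆ i ∈ Finset.range m, MeasurableSpace.comap (Z i) inferInstance)
    (Y : ℕ → Ω → ℝ)
    (hY0 : ∀ ω, Y 0 ω = binCDF (k : ℤ) n μ)
    (hY : ∀ i, 1 ≤ i → i ≤ n → ∀ ω,
      Y i ω = binCDF ((k : ℤ) - ∑ j ∈ Finset.range i, (Z j ω : ℤ)) (n - i) μ)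
    (hYtail : ∀ i, n < i → ∀ ω, Y i ω = Y n ω) :
    Supermartingale Y ℱ P ∧
      ∀ i, 1 ≤ i → i ≤ n → ∀ s : ℤ,
        ν * binCDF ((k : ℤ) - s - 1) (n - i) μ + (1 - ν) * binCDF ((k : ℤ) - s) (n - i) μ ≤
          binCDF ((k : ℤ) - s) (n - i + 1) μ :=
  binomial_cdf_supermartingale_general P μ ν hμ hμν hν n k Z hindep hZ01 hZν ℱ hℱ Y hY0 hY hYtail
end

section
/- Let μ > 0 and let X be an integrable random variable with X ≥ 0 almost surely. Define λ(c) = E[log((1−c) + c·X/μ)] for 0 ≤ c < 1. Then λ is twice continuously differentiable and concave on (0,1), with λ'(c) = E[(X/μ − 1)/((1−c) + c·X/μ)] and λ''(c) = −E[((X/μ − 1)/((1−c) + c·X/μ))²] ≤ 0; moreover λ(0) = 0 and lim_{c↓0} λ'(c) = (E[X] − μ)/μ. If in addition P(X = μ) < 1, then λ''(c) < 0 for all 0 < c < 1, so λ is strictly concave on (0,1). -/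
/-!
Write `Y = X / μ`, so that `λ(c) = E[log(1 - c + c Y)]`. For `y ≥ 0` the `c`-derivative
`(y - 1) / (1 - c + c y)` of the integrand is bounded by `1 / δ` uniformly in `y` as long as
`δ ≤ c ≤ 1 - δ`, so on the interior both derivatives may be taken under the integral sign with
constant dominating functions. As `c ↓ 0` this bound degenerates, and the domination is by
`2 (Y + 1)` instead, which is where the integrability of `X` enters. The second derivative is
minus the expectation of a square that vanishes exactly where `Y = 1`.
-/

open MeasureTheory Filter Set

section Pointwise

variable {y c : ℝ}

lemma one_sub_add_mul_pos (hy : 0 ≤ y) (hc0 : 0 ≤ c) (hc1 : c < 1) : 0 < 1 - c + c * y := by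
  nlinarith

lemma hasDerivAt_one_sub_add_mul (y c : ℝ) : HasDerivAt (fun t => 1 - t + t * y) (y - 1) c :=
  (((hasDerivAt_id' c).const_sub 1).add ((hasDerivAt_id' c).mul_const y)).congr_deriv (by ring)

lemma hasDerivAt_log_one_sub_add_mul (hy : 0 ≤ y) (hc0 : 0 ≤ c) (hc1 : c < 1) :
    HasDerivAt (fun t => Real.log (1 - t + t * y)) ((y - 1) / (1 - c + c * y)) c :=
  (hasDerivAt_one_sub_add_mul y c).log (one_sub_add_mul_pos hy hc0 hc1).ne'

lemma hasDerivAt_sub_one_div_one_sub_add_mul (hy : 0 ≤ y) (hc0 : 0 ≤ c) (hc1 : c < 1) :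
    HasDerivAt (fun t => (y - 1) / (1 - t + t * y)) (-((y - 1) / (1 - c + c * y)) ^ 2) c :=
  ((hasDerivAt_const c (y - 1)).div (hasDerivAt_one_sub_add_mul y c)
    (one_sub_add_mul_pos hy hc0 hc1).ne').congr_deriv (by rw [div_pow]; ring)

lemma abs_log_one_sub_add_mul_le (hy : 0 ≤ y) (hc0 : 0 ≤ c) (hc1 : c < 1) :
    |Real.log (1 - c + c * y)| ≤ |Real.log (1 - c)| + y := by
  have hlower : Real.log (1 - c) ≤ Real.log (1 - c + c * y) :=
    Real.log_le_log (by linarith) (by nlinarith)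
  have hupper : Real.log (1 - c + c * y) ≤ 1 - c + c * y - 1 :=
    Real.log_le_sub_one_of_pos (one_sub_add_mul_pos hy hc0 hc1)
  rw [abs_le]
  constructor <;> nlinarith [neg_abs_le (Real.log (1 - c)), abs_nonneg (Real.log (1 - c))]

lemma abs_sub_one_div_one_sub_add_mul_le (hy : 0 ≤ y) (hc0 : 0 ≤ c) (hc1 : c < 1) :
    |(y - 1) / (1 - c + c * y)| ≤ (y + 1) / (1 - c) := by
  rw [abs_div, abs_of_pos (one_sub_add_mul_pos hy hc0 hc1)]
  exact div_le_div₀ (by linarith) (abs_le.2 ⟨by linarith, by linarith⟩) (by linarith)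
    (by nlinarith)

/-- For `y ≥ 1` the denominator is at least `c (y - 1)`, for `y < 1` it is at least
`(1 - c)(1 - y)`. -/
lemma abs_sub_one_div_one_sub_add_mul_le_inv {δ : ℝ} (hy : 0 ≤ y) (hδ : 0 < δ) (hδc : δ ≤ c)
    (hδc' : δ ≤ 1 - c) : |(y - 1) / (1 - c + c * y)| ≤ 1 / δ := by
  have hd := one_sub_add_mul_pos hy (hδ.le.trans hδc) (by linarith)
  rw [abs_div, abs_of_pos hd, div_le_div_iff₀ hd hδ, one_mul]
  rcases le_or_gt 1 y with h | h
  · rw [abs_of_nonneg (by linarith)]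
    nlinarith
  · rw [abs_of_neg (by linarith)]
    nlinarith

end Pointwise

lemma exists_ball_margin_of_mem_Ioo {c₀ : ℝ} (h : c₀ ∈ Ioo 0 1) :
    ∃ δ > 0, ∀ c ∈ Metric.ball c₀ δ, δ ≤ c ∧ δ ≤ 1 - c := by
  refine ⟨min c₀ (1 - c₀) / 2, by have := h.1; have := h.2; positivity, fun c hc => ?_⟩
  rw [Metric.mem_ball, Real.dist_eq, abs_lt] at hc
  constructor <;> linarith [min_le_left c₀ (1 - c₀), min_le_right c₀ (1 - c₀)]

section Integral

variable {Ω : Type*} {mΩ : MeasurableSpace Ω} {P : Measure Ω} [IsFiniteMeasure P] {Y : Ω → ℝ}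
  {c : ℝ}

lemma integrable_log_one_sub_add_mul (hY : Integrable Y P) (hY0 : ∀ᵐ ω ∂P, 0 ≤ Y ω) (hc0 : 0 ≤ c)
    (hc1 : c < 1) : Integrable (fun ω => Real.log (1 - c + c * Y ω)) P := by
  refine ((integrable_const |Real.log (1 - c)|).add hY).mono'
    (AEMeasurable.aestronglyMeasurable (by fun_prop)) ?_
  filter_upwards [hY0] with ω hy
  exact abs_log_one_sub_add_mul_le hy hc0 hc1

lemma memLp_sub_one_div_one_sub_add_mul (hY : AEMeasurable Y P) (hY0 : ∀ᵐ ω ∂P, 0 ≤ Y ω)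
    (hc : c ∈ Ioo 0 1) (p : ENNReal) : MemLp (fun ω => (Y ω - 1) / (1 - c + c * Y ω)) p P := by
  refine .of_bound (AEMeasurable.aestronglyMeasurable (by fun_prop)) (1 / min c (1 - c)) ?_
  filter_upwards [hY0] with ω hy
  exact abs_sub_one_div_one_sub_add_mul_le_inv hy (lt_min hc.1 (by linarith [hc.2]))
    (min_le_left _ _) (min_le_right _ _)

lemma hasDerivAt_integral_log_one_sub_add_mul (hY : Integrable Y P) (hY0 : ∀ᵐ ω ∂P, 0 ≤ Y ω)
    (hc : c ∈ Ioo 0 1) :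
    HasDerivAt (fun t => ∫ ω, Real.log (1 - t + t * Y ω) ∂P)
      (∫ ω, (Y ω - 1) / (1 - c + c * Y ω) ∂P) c := by
  obtain ⟨δ, hδ, hball⟩ := exists_ball_margin_of_mem_Ioo hc
  refine (hasDerivAt_integral_of_dominated_loc_of_deriv_le (bound := fun _ => 1 / δ)
    (F := fun t ω => Real.log (1 - t + t * Y ω)) (F' := fun t ω => (Y ω - 1) / (1 - t + t * Y ω))
    (Metric.ball_mem_nhds c hδ) (.of_forall fun t => AEMeasurable.aestronglyMeasurable
      (by fun_prop)) (integrable_log_one_sub_add_mul hY hY0 hc.1.le hc.2)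
    (AEMeasurable.aestronglyMeasurable (by fun_prop)) ?_ (integrable_const _) ?_).2
  · filter_upwards [hY0] with ω hy t ht
    exact abs_sub_one_div_one_sub_add_mul_le_inv hy hδ (hball t ht).1 (hball t ht).2
  · filter_upwards [hY0] with ω hy t ht
    exact hasDerivAt_log_one_sub_add_mul hy (hδ.le.trans (hball t ht).1)
      (by linarith [(hball t ht).2])

lemma hasDerivAt_integral_sub_one_div_one_sub_add_mul (hY : AEMeasurable Y P)
    (hY0 : ∀ᵐ ω ∂P, 0 ≤ Y ω) (hc : c ∈ Ioo 0 1) :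
    HasDerivAt (fun t => ∫ ω, (Y ω - 1) / (1 - t + t * Y ω) ∂P)
      (∫ ω, -((Y ω - 1) / (1 - c + c * Y ω)) ^ 2 ∂P) c := by
  obtain ⟨δ, hδ, hball⟩ := exists_ball_margin_of_mem_Ioo hc
  refine (hasDerivAt_integral_of_dominated_loc_of_deriv_le (bound := fun _ => (1 / δ) ^ 2)
    (F := fun t ω => (Y ω - 1) / (1 - t + t * Y ω))
    (F' := fun t ω => -((Y ω - 1) / (1 - t + t * Y ω)) ^ 2)
    (Metric.ball_mem_nhds c hδ) (.of_forall fun t => AEMeasurable.aestronglyMeasurable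
      (by fun_prop)) ((memLp_sub_one_div_one_sub_add_mul hY hY0 hc 1).integrable le_rfl)
    (AEMeasurable.aestronglyMeasurable (by fun_prop)) ?_ (integrable_const _) ?_).2
  · filter_upwards [hY0] with ω hy t ht
    rw [norm_neg, norm_pow, Real.norm_eq_abs]
    exact pow_le_pow_left₀ (abs_nonneg _)
      (abs_sub_one_div_one_sub_add_mul_le_inv hy hδ (hball t ht).1 (hball t ht).2) 2
  · filter_upwards [hY0] with ω hy t ht
    exact hasDerivAt_sub_one_div_one_sub_add_mul hy (hδ.le.trans (hball t ht).1)
      (by linarith [(hball t ht).2])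

lemma continuousOn_integral_neg_sq_sub_one_div_one_sub_add_mul (hY : AEMeasurable Y P)
    (hY0 : ∀ᵐ ω ∂P, 0 ≤ Y ω) :
    ContinuousOn (fun t => ∫ ω, -((Y ω - 1) / (1 - t + t * Y ω)) ^ 2 ∂P) (Ioo 0 1) := by
  intro c hc
  obtain ⟨δ, hδ, hball⟩ := exists_ball_margin_of_mem_Ioo hc
  refine (continuousAt_of_dominated (bound := fun _ => (1 / δ) ^ 2)
    (.of_forall fun t => AEMeasurable.aestronglyMeasurable (by fun_prop)) ?_
    (integrable_const _) ?_).continuousWithinAt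
  · filter_upwards [Metric.ball_mem_nhds c hδ] with t ht
    filter_upwards [hY0] with ω hy
    rw [norm_neg, norm_pow, Real.norm_eq_abs]
    exact pow_le_pow_left₀ (abs_nonneg _)
      (abs_sub_one_div_one_sub_add_mul_le_inv hy hδ (hball t ht).1 (hball t ht).2) 2
  · filter_upwards [hY0] with ω hy
    exact (hasDerivAt_sub_one_div_one_sub_add_mul hy hc.1.le hc.2).continuousAt.pow 2 |>.neg

lemma tendsto_integral_sub_one_div_one_sub_add_mul_nhdsGT_zero (hY : Integrable Y P)
    (hY0 : ∀ᵐ ω ∂P, 0 ≤ Y ω) :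
    Tendsto (fun t => ∫ ω, (Y ω - 1) / (1 - t + t * Y ω) ∂P) (nhdsWithin 0 (Ioi 0))
      (nhds (∫ ω, (Y ω - 1) ∂P)) := by
  refine tendsto_integral_filter_of_dominated_convergence (fun ω => 2 * (Y ω + 1))
    (.of_forall fun t => AEMeasurable.aestronglyMeasurable (by fun_prop)) ?_
    ((hY.add (integrable_const 1)).const_mul 2) ?_
  · filter_upwards [Ioo_mem_nhdsGT (show (0 : ℝ) < 1 / 2 by norm_num)] with t ht
    filter_upwards [hY0] with ω hy
    rw [Real.norm_eq_abs]
    calc |(Y ω - 1) / (1 - t + t * Y ω)| ≤ (Y ω + 1) / (1 - t) :=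
          abs_sub_one_div_one_sub_add_mul_le hy ht.1.le (by linarith [ht.2])
      _ ≤ 2 * (Y ω + 1) := by
          rw [div_le_iff₀ (by linarith [ht.2])]
          nlinarith [mul_nonneg (by linarith : 0 ≤ Y ω + 1) (by linarith [ht.2] : 0 ≤ 1 - 2 * t)]
  · filter_upwards [hY0] with ω hy
    have hcont := (hasDerivAt_sub_one_div_one_sub_add_mul hy le_rfl one_pos).continuousAt
    simpa using hcont.tendsto.mono_left nhdsWithin_le_nhds

lemma integral_neg_sq_sub_one_div_one_sub_add_mul_neg (hY : AEMeasurable Y P)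
    (hY0 : ∀ᵐ ω ∂P, 0 ≤ Y ω) (hY1 : ¬ ∀ᵐ ω ∂P, Y ω = 1) (hc : c ∈ Ioo 0 1) :
    ∫ ω, -((Y ω - 1) / (1 - c + c * Y ω)) ^ 2 ∂P < 0 := by
  rw [integral_neg, neg_neg_iff_pos]
  refine lt_of_le_of_ne (integral_nonneg fun ω => sq_nonneg _) (Ne.symm fun h => hY1 ?_)
  have hzero := (integral_eq_zero_iff_of_nonneg (fun ω => sq_nonneg _)
    (memLp_sub_one_div_one_sub_add_mul hY hY0 hc 2).integrable_sq).1 h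
  filter_upwards [hY0, hzero] with ω hy hω
  have hd := (one_sub_add_mul_pos hy hc.1.le hc.2).ne'
  simp only [Pi.zero_apply, ne_eq, OfNat.ofNat_ne_zero, not_false_eq_true, pow_eq_zero_iff,
    div_eq_zero_iff, hd, or_false] at hω
  linarith

end Integral

section Concavity

variable {D : Set ℝ} {f f' f'' : ℝ → ℝ}

lemma concaveOn_of_hasDerivAt2_nonpos (hD : Convex ℝ D) (hDo : IsOpen D)
    (hf : ∀ x ∈ D, HasDerivAt f (f' x) x) (hf' : ∀ x ∈ D, HasDerivAt f' (f'' x) x)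
    (hf'' : ∀ x ∈ D, f'' x ≤ 0) : ConcaveOn ℝ D f := by
  refine concaveOn_of_hasDerivWithinAt2_nonpos hD (f' := f') (f'' := f'')
    (fun x hx => (hf x hx).continuousAt.continuousWithinAt) ?_ ?_ ?_ <;> rw [hDo.interior_eq]
  · exact fun x hx => (hf x hx).hasDerivWithinAt
  · exact fun x hx => (hf' x hx).hasDerivWithinAt
  · exact hf''

lemma strictConcaveOn_of_hasDerivAt2_neg (hD : Convex ℝ D) (hDo : IsOpen D)
    (hf : ∀ x ∈ D, HasDerivAt f (f' x) x) (hf' : ∀ x ∈ D, HasDerivAt f' (f'' x) x)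
    (hf'' : ∀ x ∈ D, f'' x < 0) : StrictConcaveOn ℝ D f := by
  have hanti : StrictAntiOn f' D := by
    refine strictAntiOn_of_hasDerivWithinAt_neg hD (f' := f'')
      (fun x hx => (hf' x hx).continuousAt.continuousWithinAt) ?_ ?_ <;> rw [hDo.interior_eq]
    · exact fun x hx => (hf' x hx).hasDerivWithinAt
    · exact hf''
  refine StrictAntiOn.strictConcaveOn_of_deriv hD
    (fun x hx => (hf x hx).continuousAt.continuousWithinAt) ?_
  rw [hDo.interior_eq]
  exact hanti.congr fun x hx => ((hf x hx).deriv).symm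

end Concavity

lemma measure_setOf_eq_one_of_ae {Ω : Type*} {mΩ : MeasurableSpace Ω} {P : Measure Ω}
    [IsProbabilityMeasure P] {p : Ω → Prop} (h : ∀ᵐ ω ∂P, p ω) : P {ω | p ω} = 1 :=
  (measure_congr (ae_eq_univ.2 (ae_iff.1 h))).trans measure_univ

/-- Let `μ > 0` and let `X ≥ 0` a.s. be integrable.  With
`lam c = E[log((1−c) + c·X/μ)]`, `lam' c = E[(X/μ − 1)/((1−c) + c·X/μ)]` and
`lam'' c = −E[((X/μ − 1)/((1−c) + c·X/μ))²]`, the function `lam` is twice continuously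
differentiable and concave on `(0,1)` with derivative `lam'` and second derivative
`lam'' ≤ 0`; moreover `lam 0 = 0` and `lam' c → (E[X] − μ)/μ` as `c ↓ 0`.  If in addition
`P(X = μ) < 1` then `lam'' < 0` on `(0,1)` and `lam` is strictly concave there. -/
theorem lambda_twice_differentiable_concave
    {Ω : Type*} {mΩ : MeasurableSpace Ω} (P : Measure Ω) [IsProbabilityMeasure P]
    (μ : ℝ) (hμ : 0 < μ)
    (X : Ω → ℝ) (hXint : Integrable X P) (hXpos : ∀ᵐ ω ∂P, 0 ≤ X ω)
    (lam lam' lam'' : ℝ → ℝ)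
    (hlam : ∀ c, lam c = ∫ ω, Real.log ((1 - c) + c * X ω / μ) ∂P)
    (hlam' : ∀ c, lam' c = ∫ ω, (X ω / μ - 1) / ((1 - c) + c * X ω / μ) ∂P)
    (hlam'' : ∀ c, lam'' c = ∫ ω, -((X ω / μ - 1) / ((1 - c) + c * X ω / μ)) ^ 2 ∂P) :
    (∀ c ∈ Set.Ioo (0 : ℝ) 1, HasDerivAt lam (lam' c) c) ∧
    (∀ c ∈ Set.Ioo (0 : ℝ) 1, HasDerivAt lam' (lam'' c) c) ∧
    ContinuousOn lam'' (Set.Ioo (0 : ℝ) 1) ∧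
    (∀ c ∈ Set.Ioo (0 : ℝ) 1, lam'' c ≤ 0) ∧
    ConcaveOn ℝ (Set.Ioo (0 : ℝ) 1) lam ∧
    lam 0 = 0 ∧
    Tendsto lam' (nhdsWithin 0 (Set.Ioi 0)) (nhds ((∫ ω, X ω ∂P - μ) / μ)) ∧
    (P {ω | X ω = μ} < 1 →
      (∀ c ∈ Set.Ioo (0 : ℝ) 1, lam'' c < 0) ∧ StrictConcaveOn ℝ (Set.Ioo (0 : ℝ) 1) lam) := by
  have hY : Integrable (fun ω => X ω / μ) P := hXint.div_const μ
  have hY0 : ∀ᵐ ω ∂P, 0 ≤ X ω / μ := hXpos.mono fun ω h => div_nonneg h hμ.le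
  simp only [mul_div_assoc] at hlam hlam' hlam''
  obtain rfl := funext hlam
  obtain rfl := funext hlam'
  obtain rfl := funext hlam''
  have hd1 := fun c (hc : c ∈ Ioo (0 : ℝ) 1) => hasDerivAt_integral_log_one_sub_add_mul hY hY0 hc
  have hd2 := fun c (hc : c ∈ Ioo (0 : ℝ) 1) =>
    hasDerivAt_integral_sub_one_div_one_sub_add_mul hY.aemeasurable hY0 hc
  have hnonpos : ∀ c ∈ Ioo (0 : ℝ) 1, ∫ ω, -((X ω / μ - 1) / (1 - c + c * (X ω / μ))) ^ 2 ∂P ≤ 0 :=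
    fun c _ => integral_nonpos fun ω => neg_nonpos.2 (sq_nonneg _)
  have hmean : (∫ ω, X ω ∂P - μ) / μ = ∫ ω, (X ω / μ - 1) ∂P := by
    rw [integral_sub hY (integrable_const 1), integral_div, integral_const, probReal_univ,
      one_smul, sub_div, div_self hμ.ne']
  refine ⟨hd1, hd2, continuousOn_integral_neg_sq_sub_one_div_one_sub_add_mul hY.aemeasurable hY0,
    hnonpos, concaveOn_of_hasDerivAt2_nonpos (convex_Ioo 0 1) isOpen_Ioo hd1 hd2 hnonpos,
    by simp, hmean ▸ tendsto_integral_sub_one_div_one_sub_add_mul_nhdsGT_zero hY hY0,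
    fun hX => ?_⟩
  have hY1 : ¬ ∀ᵐ ω ∂P, X ω / μ = 1 := fun h => hX.ne <| by
    simpa [div_eq_one_iff_eq hμ.ne'] using measure_setOf_eq_one_of_ae h
  have hneg := fun c (hc : c ∈ Ioo (0 : ℝ) 1) =>
    integral_neg_sq_sub_one_div_one_sub_add_mul_neg hY.aemeasurable hY0 hY1 hc
  exact ⟨hneg, strictConcaveOn_of_hasDerivAt2_neg (convex_Ioo 0 1) isOpen_Ioo hd1 hd2 hneg⟩
end

section
/- Let μ > 0, let X be an integrable random variable with X ≥ 0 almost surely, E[X] ≤ μ and P(X = μ) < 1, and let 0 < c < 1. Then λ(c) = E[log((1−c) + c·X/μ)] < 0, and for any i.i.d. sample X_1, X_2, … of X the process M_n(c) = ∏_{i=1}^n ((1−c) + c·X_i/μ) converges to 0 almost surely as n → ∞. -/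
open MeasureTheory ProbabilityTheory Filter Finset Real Topology

/-! The factor `1 - c + c x / μ` has mean at most `1` and is not a.s. equal to `1`, so integrating
the strict inequality `log y < y - 1` (for `y ≠ 1`) gives `λ(c) < 0`. By the strong law of large
numbers `(log M_n(c)) / n → λ(c)` a.s., hence `log M_n(c) → -∞` and `M_n(c) → 0`. -/

theorem tendsto_atBot_of_tendsto_div_natCast {s : ℕ → ℝ} {L : ℝ} (hL : L < 0)
    (h : Tendsto (fun n : ℕ => s n / n) atTop (𝓝 L)) : Tendsto s atTop atBot := by
  refine (tendsto_natCast_atTop_atTop.atTop_mul_neg hL h).congr' ?_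
  filter_upwards [eventually_ne_atTop 0] with n hn
  field_simp

theorem tendsto_prod_zero_of_tendsto_average_log {a : ℕ → ℝ} (ha : ∀ i, 0 < a i) {L : ℝ}
    (hL : L < 0) (h : Tendsto (fun n : ℕ => (∑ i ∈ range n, log (a i)) / n) atTop (𝓝 L)) :
    Tendsto (fun n => ∏ i ∈ range n, a i) atTop (𝓝 0) := by
  have hprod : ∀ n, ∏ i ∈ range n, a i = exp (∑ i ∈ range n, log (a i)) := fun n => by
    rw [exp_sum]
    exact prod_congr rfl fun i _ => (exp_log (ha i)).symm
  simpa only [hprod, Function.comp_def] using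
    tendsto_exp_atBot.comp (tendsto_atBot_of_tendsto_div_natCast hL h)

namespace MeasureTheory

variable {α : Type*} {mα : MeasurableSpace α} {μ : Measure α} {f : α → ℝ}

/-- `log a ≤ log f ≤ f - 1` bounds `|log f|` by `|log a| + |f|`. -/
theorem Integrable.log_of_pos_le [IsFiniteMeasure μ] (hf : Integrable f μ) {a : ℝ} (ha : 0 < a)
    (haf : ∀ᵐ x ∂μ, a ≤ f x) : Integrable (fun x => log (f x)) μ := by
  refine ((integrable_const |log a|).add hf.norm).mono'
    (measurable_log.comp_aemeasurable hf.aemeasurable).aestronglyMeasurable ?_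
  filter_upwards [haf] with x hx
  have hfx : 0 < f x := ha.trans_le hx
  simp only [Pi.add_apply, norm_eq_abs, abs_le]
  constructor
  · linarith [log_le_log ha hx, neg_abs_le (log a), abs_nonneg (f x)]
  · linarith [log_le_sub_one_of_pos hfx, le_abs_self (f x), abs_nonneg (log a)]

/-- Strict form of `log x ≤ x - 1`, integrated. -/
theorem integral_log_lt_zero [IsProbabilityMeasure μ] (hf : Integrable f μ)
    (hlog : Integrable (fun x => log (f x)) μ) (hpos : ∀ᵐ x ∂μ, 0 < f x)
    (hle : ∫ x, f x ∂μ ≤ 1) (hne : ¬ f =ᵐ[μ] 1) : ∫ x, log (f x) ∂μ < 0 := by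
  set g : α → ℝ := fun x => f x - 1 - log (f x)
  have hf_sub : Integrable (fun x => f x - 1) μ := hf.sub (integrable_const 1)
  have hg_nonneg : 0 ≤ᵐ[μ] g :=
    hpos.mono fun x hx => by simp only [Pi.zero_apply, g]; linarith [log_le_sub_one_of_pos hx]
  have hg_int : Integrable g μ := hf_sub.sub hlog
  have hg_ne : ∫ x, g x ∂μ ≠ 0 := by
    intro h0
    refine hne ?_
    filter_upwards [(integral_eq_zero_iff_of_nonneg_ae hg_nonneg hg_int).1 h0, hpos]
      with x hx hx0
    by_contra hx1
    exact (log_lt_sub_one_of_pos hx0 hx1).ne' (by simpa [g, sub_eq_zero] using hx)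
  have hg_eq : ∫ x, g x ∂μ = ∫ x, f x ∂μ - 1 - ∫ x, log (f x) ∂μ := by
    simp only [g]
    rw [integral_sub hf_sub hlog, integral_sub hf (integrable_const 1),
      integral_const, probReal_univ, smul_eq_mul, mul_one]
  linarith [(integral_nonneg_of_ae hg_nonneg).lt_of_ne hg_ne.symm]

end MeasureTheory

namespace ProbabilityTheory

theorem strong_law_ae_comp {Ω α : Type*} {mΩ : MeasurableSpace Ω} {mα : MeasurableSpace α}
    {P : Measure Ω} {X : ℕ → Ω → α} {X₀ : Ω → α} {ψ : α → ℝ} (hψ : Measurable ψ)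
    (hint : Integrable (fun ω => ψ (X₀ ω)) P)
    (hindep : Pairwise fun i j => IndepFun (X i) (X j) P)
    (hident : ∀ i, IdentDistrib (X i) X₀ P P) :
    ∀ᵐ ω ∂P, Tendsto (fun n : ℕ => (∑ i ∈ range n, ψ (X i ω)) / n) atTop
      (𝓝 (∫ ω, ψ (X₀ ω) ∂P)) := by
  have hident₀ : IdentDistrib (ψ ∘ X 0) (ψ ∘ X₀) P P := (hident 0).comp hψ
  have := strong_law_ae_real (fun i => ψ ∘ X i) (hident₀.integrable_iff.2 hint)
    (fun i j hij => (hindep hij).comp hψ hψ)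
    (fun i => ((hident i).trans (hident 0).symm).comp hψ)
  rwa [hident₀.integral_eq] at this

end ProbabilityTheory

section AffineFactor

variable {μ c x : ℝ}

theorem one_sub_le_one_sub_add_mul_div (hc : 0 ≤ c) (hμ : 0 ≤ μ) (hx : 0 ≤ x) :
    1 - c ≤ 1 - c + c * x / μ :=
  le_add_of_nonneg_right (by positivity)

theorem one_sub_add_mul_div_eq_one_iff (hc : c ≠ 0) (hμ : μ ≠ 0) :
    1 - c + c * x / μ = 1 ↔ x = μ := by
  rw [sub_add, sub_eq_self, sub_eq_zero, eq_comm, mul_div_assoc, mul_eq_left₀ hc,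
    div_eq_one_iff_eq hμ]

variable {Ω : Type*} {mΩ : MeasurableSpace Ω} {P : Measure Ω} {X₀ : Ω → ℝ}

theorem integrable_log_one_sub_add_mul_div [IsFiniteMeasure P] (hμ : 0 < μ) (hc0 : 0 ≤ c)
    (hc1 : c < 1) (hX₀int : Integrable X₀ P) (hX₀pos : ∀ᵐ ω ∂P, 0 ≤ X₀ ω) :
    Integrable (fun ω => log (1 - c + c * X₀ ω / μ)) P :=
  ((integrable_const _).add ((hX₀int.const_mul c).div_const μ)).log_of_pos_le (sub_pos.2 hc1)
    (hX₀pos.mono fun _ => one_sub_le_one_sub_add_mul_div hc0 hμ.le)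

theorem integral_log_one_sub_add_mul_div_lt_zero [IsProbabilityMeasure P] (hμ : 0 < μ)
    (hc : c ∈ Set.Ioo (0 : ℝ) 1) (hX₀int : Integrable X₀ P) (hX₀pos : ∀ᵐ ω ∂P, 0 ≤ X₀ ω)
    (hEX₀ : ∫ ω, X₀ ω ∂P ≤ μ) (hXμ : P {ω | X₀ ω = μ} < 1) :
    ∫ ω, log (1 - c + c * X₀ ω / μ) ∂P < 0 := by
  obtain ⟨hc0, hc1⟩ := hc
  have hint : Integrable (fun ω => 1 - c + c * X₀ ω / μ) P :=
    (integrable_const _).add ((hX₀int.const_mul c).div_const μ)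
  have hpos : ∀ᵐ ω ∂P, 0 < 1 - c + c * X₀ ω / μ := hX₀pos.mono fun _ hx =>
    (sub_pos.2 hc1).trans_le (one_sub_le_one_sub_add_mul_div hc0.le hμ.le hx)
  have hmean : ∫ ω, 1 - c + c * X₀ ω / μ ∂P ≤ 1 := by
    rw [integral_add (integrable_const _) ((hX₀int.const_mul c).div_const μ), integral_const,
      integral_div, integral_const_mul, probReal_univ, smul_eq_mul, one_mul]
    have : (c * ∫ ω, X₀ ω ∂P) / μ ≤ c := by
      rw [div_le_iff₀ hμ]
      exact mul_le_mul_of_nonneg_left hEX₀ hc0.le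
    linarith
  have hnot_one : ¬ (fun ω => 1 - c + c * X₀ ω / μ) =ᵐ[P] 1 := fun h =>
    hXμ.ne (measure_congr (ae_eq_univ.2 (ae_iff.1 (h.mono fun _ hω =>
      (one_sub_add_mul_div_eq_one_iff hc0.ne' hμ.ne').1 hω))) |>.trans measure_univ)
  exact integral_log_lt_zero hint
    (integrable_log_one_sub_add_mul_div hμ hc0.le hc1 hX₀int hX₀pos) hpos hmean hnot_one

end AffineFactor

/-- Let `μ > 0`, let `X₀` be integrable with `X₀ ≥ 0` a.s., `E[X₀] ≤ μ` and `P(X₀ = μ) < 1`,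
and let `0 < c < 1`.  Then `λ(c) = E[log((1−c) + c·X₀/μ)] < 0`, and for any i.i.d. sample
`X 0, X 1, …` of `X₀` the test supermartingale
`M n = ∏_{i<n} ((1−c) + c·X i/μ)` converges to `0` almost surely. -/
theorem test_supermartingale_tendsto_zero_under_null
    {Ω : Type*} {mΩ : MeasurableSpace Ω} (P : Measure Ω) [IsProbabilityMeasure P]
    (μ : ℝ) (hμ : 0 < μ)
    (X₀ : Ω → ℝ) (hX₀int : Integrable X₀ P) (hX₀pos : ∀ᵐ ω ∂P, 0 ≤ X₀ ω)
    (hEX₀ : ∫ ω, X₀ ω ∂P ≤ μ) (hXμ : P {ω | X₀ ω = μ} < 1)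
    (c : ℝ) (hc : c ∈ Set.Ioo (0 : ℝ) 1)
    (X : ℕ → Ω → ℝ)
    (hindep : iIndepFun X P)
    (hident : ∀ i, IdentDistrib (X i) X₀ P P) :
    (∫ ω, Real.log ((1 - c) + c * X₀ ω / μ) ∂P) < 0 ∧
      ∀ᵐ ω ∂P, Tendsto
        (fun n => ∏ i ∈ Finset.range n, ((1 - c) + c * X i ω / μ)) atTop (nhds 0) := by
  have hneg := integral_log_one_sub_add_mul_div_lt_zero hμ hc hX₀int hX₀pos hEX₀ hXμ
  refine ⟨hneg, ?_⟩
  have hX_nonneg : ∀ᵐ ω ∂P, ∀ i, 0 ≤ X i ω := ae_all_iff.2 fun i =>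
    (hident i).symm.ae_snd measurableSet_Ici hX₀pos
  filter_upwards [strong_law_ae_comp (ψ := fun x => log (1 - c + c * x / μ)) (by fun_prop)
    (integrable_log_one_sub_add_mul_div hμ hc.1.le hc.2 hX₀int hX₀pos)
    (fun _ _ hij => hindep.indepFun hij) hident, hX_nonneg] with ω hω hω_nonneg
  refine tendsto_prod_zero_of_tendsto_average_log (fun i => ?_) hneg hω
  exact (sub_pos.2 hc.2).trans_le (one_sub_le_one_sub_add_mul_div hc.1.le hμ.le (hω_nonneg i))
end

section
/- Let μ > 0 and let X be an integrable random variable with X ≥ 0 almost surely and E[X] > μ. Then there exists c_max > 0 such that λ(c) = E[log((1−c) + c·X/μ)] > 0 for all 0 < c < c_max. For any 0 < c < 1 with λ(c) > 0 and any i.i.d. sample X_1, X_2, … of X, the process M_n(c) = ∏_{i=1}^n ((1−c) + c·X_i/μ) converges to +∞ almost surely as n → ∞. If moreover P(X = 0) > 0, then lim_{c↑1} λ(c) = −∞, so that the supremum c_max of the set where λ > 0 satisfies c_max < 1. -/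
/-!
With `Y = X/μ - 1 ≥ -1` each factor is `1 + cY` and `λ(c) = E[log (1 + cY)]`.
Since `|log (1 + cY)| ≤ 2c|Y|` for `c ≤ 1/2` and `log (1 + cY)/c → Y` as `c → 0⁺`,
dominated convergence gives `λ(c)/c → E[Y] > 0`. The strong law of large numbers for the
i.i.d. logarithms of the factors gives `log M_n(c) ~ n λ(c) → ∞`. Finally
`log (1 + cY) = log (1 - c)` on `{X = 0}` and `log (1 + cY) ≤ |Y|` elsewhere, so
`λ(c) ≤ P(X = 0) log (1 - c) + E|Y| → -∞` as `c ↑ 1`.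
-/

open MeasureTheory ProbabilityTheory Filter Topology Set Real

namespace Real

lemma abs_log_one_add_le_two_mul_abs {t : ℝ} (ht : -(1 / 2) ≤ t) :
    |log (1 + t)| ≤ 2 * |t| := by
  have h1 : 0 < 1 + t := by linarith
  rw [abs_le]
  constructor
  · have h2 : t / (1 + t) ≤ log (1 + t) := by
      convert one_sub_inv_le_log_of_pos h1 using 1
      field_simp
      ring
    have h3 : -(2 * |t|) ≤ t / (1 + t) := by
      rw [le_div_iff₀ h1]
      rcases le_total 0 t with h | h
      · rw [abs_of_nonneg h]; nlinarith
      · rw [abs_of_nonpos h]; nlinarith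
    linarith
  · linarith [log_le_sub_one_of_pos h1, le_abs_self t, abs_nonneg t]

lemma log_one_add_mul_le_abs {c y : ℝ} (hc0 : 0 ≤ c) (hc1 : c < 1) (hy : -1 ≤ y) :
    log (1 + c * y) ≤ |y| := by
  have hcy : c * y ≤ |y| := by
    rcases le_total 0 y with h | h
    · rw [abs_of_nonneg h]; nlinarith
    · nlinarith [abs_nonneg y]
  linarith [log_le_sub_one_of_pos (by nlinarith : 0 < 1 + c * y)]

lemma abs_log_one_add_mul_le {c y : ℝ} (hc0 : 0 ≤ c) (hc1 : c < 1) (hy : -1 ≤ y) :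
    |log (1 + c * y)| ≤ -log (1 - c) + |y| := by
  have hlow : log (1 - c) ≤ log (1 + c * y) := log_le_log (by linarith) (by nlinarith)
  rw [abs_le]
  constructor
  · linarith [abs_nonneg y]
  · linarith [log_one_add_mul_le_abs hc0 hc1 hy,
      log_nonpos (by linarith : 0 ≤ 1 - c) (by linarith)]

lemma tendsto_log_one_add_mul_div (y : ℝ) :
    Tendsto (fun c => log (1 + c * y) / c) (𝓝[>] 0) (𝓝 y) := by
  have h : HasDerivAt (fun c => log (1 + c * y)) y 0 := by
    simpa using (((hasDerivAt_id (0 : ℝ)).mul_const y).const_add 1).log (by simp)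
  simpa [div_eq_inv_mul] using h.tendsto_slope_zero_right

end Real

section LogGrowth

variable {Ω : Type*} {mΩ : MeasurableSpace Ω} {P : Measure Ω} {Y : Ω → ℝ}

lemma aemeasurable_log_one_add_mul (hY : AEMeasurable Y P) (c : ℝ) :
    AEMeasurable (fun ω => log (1 + c * Y ω)) P := by
  fun_prop

lemma integrable_log_one_add_mul [IsFiniteMeasure P] (hY : Integrable Y P)
    (hY1 : ∀ᵐ ω ∂P, -1 ≤ Y ω) {c : ℝ} (hc0 : 0 ≤ c) (hc1 : c < 1) :
    Integrable (fun ω => log (1 + c * Y ω)) P := by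
  refine ((integrable_const (-log (1 - c))).add hY.abs).mono'
    (aemeasurable_log_one_add_mul hY.aemeasurable c).aestronglyMeasurable ?_
  filter_upwards [hY1] with ω hω
  exact abs_log_one_add_mul_le hc0 hc1 hω

lemma tendsto_integral_log_one_add_mul_div (hY : Integrable Y P)
    (hY1 : ∀ᵐ ω ∂P, -1 ≤ Y ω) :
    Tendsto (fun c => (∫ ω, log (1 + c * Y ω) ∂P) / c) (𝓝[>] 0) (𝓝 (∫ ω, Y ω ∂P)) := by
  simp_rw [← integral_div]
  refine tendsto_integral_filter_of_dominated_convergence (fun ω => 2 * |Y ω|)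
    (Eventually.of_forall fun c =>
      ((aemeasurable_log_one_add_mul hY.aemeasurable c).div_const c).aestronglyMeasurable)
    ?_ (hY.abs.const_mul 2) (Eventually.of_forall fun ω => tendsto_log_one_add_mul_div (Y ω))
  filter_upwards [Ioc_mem_nhdsGT (by norm_num : (0 : ℝ) < 1 / 2)] with c ⟨hc0, hc⟩
  filter_upwards [hY1] with ω hω
  rw [norm_div, norm_of_nonneg hc0.le, div_le_iff₀ hc0, Real.norm_eq_abs]
  calc |log (1 + c * Y ω)| ≤ 2 * |c * Y ω| := abs_log_one_add_le_two_mul_abs (by nlinarith)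
    _ = 2 * |Y ω| * c := by rw [abs_mul, abs_of_pos hc0]; ring

lemma exists_forall_integral_log_one_add_mul_pos (hY : Integrable Y P)
    (hY1 : ∀ᵐ ω ∂P, -1 ≤ Y ω) (hpos : 0 < ∫ ω, Y ω ∂P) :
    ∃ ε > 0, ∀ c ∈ Ioo 0 ε, 0 < ∫ ω, log (1 + c * Y ω) ∂P := by
  have h := ((tendsto_integral_log_one_add_mul_div hY hY1).eventually
    (eventually_gt_nhds hpos)).and self_mem_nhdsWithin
  obtain ⟨ε, hε, hsub⟩ := mem_nhdsGT_iff_exists_Ioo_subset.mp h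
  exact ⟨ε, hε, fun c hc => (div_pos_iff_of_pos_right (hsub hc).2).mp (hsub hc).1⟩

lemma integral_log_one_add_mul_le [IsFiniteMeasure P] (hY : Integrable Y P)
    (hY1 : ∀ᵐ ω ∂P, -1 ≤ Y ω) {c : ℝ} (hc0 : 0 ≤ c) (hc1 : c < 1) :
    ∫ ω, log (1 + c * Y ω) ∂P ≤ P.real {ω | Y ω = -1} * log (1 - c) + ∫ ω, |Y ω| ∂P := by
  set A := {ω | Y ω = -1}
  have hA : NullMeasurableSet A P :=
    hY.aestronglyMeasurable.nullMeasurableSet_eq_fun aestronglyMeasurable_const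
  have hind : Integrable (A.indicator fun _ => log (1 - c)) P :=
    (integrable_const _).indicator₀ hA
  calc ∫ ω, log (1 + c * Y ω) ∂P
      ≤ ∫ ω, A.indicator (fun _ => log (1 - c)) ω + |Y ω| ∂P := by
        refine integral_mono_ae (integrable_log_one_add_mul hY hY1 hc0 hc1) (hind.add hY.abs) ?_
        filter_upwards [hY1] with ω hω
        by_cases hωA : ω ∈ A
        · rw [indicator_of_mem hωA, show Y ω = -1 from hωA]
          simp [← sub_eq_add_neg]
        · rw [indicator_of_notMem hωA, zero_add]
          exact log_one_add_mul_le_abs hc0 hc1 hω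
    _ = P.real A * log (1 - c) + ∫ ω, |Y ω| ∂P := by
        rw [integral_add hind hY.abs, integral_indicator₀ hA, setIntegral_const, smul_eq_mul]

lemma tendsto_integral_log_one_add_mul_atBot [IsFiniteMeasure P] (hY : Integrable Y P)
    (hY1 : ∀ᵐ ω ∂P, -1 ≤ Y ω) (hA : 0 < P {ω | Y ω = -1}) :
    Tendsto (fun c => ∫ ω, log (1 + c * Y ω) ∂P) (𝓝[<] 1) atBot := by
  have hA' : 0 < P.real {ω | Y ω = -1} := ENNReal.toReal_pos hA.ne' (measure_ne_top P _)
  have hlog : Tendsto (fun c : ℝ => log (1 - c)) (𝓝[<] 1) atBot := by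
    refine tendsto_log_nhdsGT_zero.comp
      (tendsto_nhdsWithin_of_tendsto_nhds_of_eventually_within _
        (((continuous_sub_left 1).tendsto' 1 0 (sub_self 1)).mono_left nhdsWithin_le_nhds) ?_)
    filter_upwards [self_mem_nhdsWithin] with c (hc : c < 1)
    exact sub_pos.2 hc
  refine tendsto_atBot_mono' _ ?_
    (tendsto_atBot_add_const_right _ (∫ ω, |Y ω| ∂P) (hlog.const_mul_atBot hA'))
  filter_upwards [Ioo_mem_nhdsLT (by norm_num : (0 : ℝ) < 1)] with c ⟨hc0, hc1⟩
  exact integral_log_one_add_mul_le hY hY1 hc0.le hc1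

end LogGrowth

lemma sSup_setOf_pos_lt_of_tendsto_atBot {f : ℝ → ℝ} {b : ℝ} (hb : 0 < b)
    (hf : Tendsto f (𝓝[<] b) atBot) : sSup {c | c ∈ Ioo 0 b ∧ 0 < f c} < b := by
  obtain ⟨a, ha, hneg⟩ :=
    mem_nhdsLT_iff_exists_Ioo_subset.mp (hf.eventually (eventually_lt_atBot 0))
  refine (Real.sSup_le ?_ (le_max_right a 0)).trans_lt (max_lt ha hb)
  rintro c ⟨⟨-, hcb⟩, hc⟩
  by_contra! hac
  exact (hneg ⟨(le_max_left a 0).trans_lt hac, hcb⟩ : f c < 0).not_gt hc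

lemma ae_tendsto_sum_range_atTop_of_integral_pos {Ω : Type*} {mΩ : MeasurableSpace Ω}
    {P : Measure Ω} {Z : ℕ → Ω → ℝ} (hindep : Pairwise (Function.onFun (IndepFun · · P) Z))
    (hident : ∀ i, IdentDistrib (Z i) (Z 0) P P) (hpos : 0 < ∫ ω, Z 0 ω ∂P) :
    ∀ᵐ ω ∂P, Tendsto (fun n => ∑ i ∈ Finset.range n, Z i ω) atTop atTop := by
  filter_upwards [strong_law_ae_real Z (Integrable.of_integral_ne_zero hpos.ne') hindep hident]
    with ω hω
  refine (tendsto_natCast_atTop_atTop.atTop_mul_pos hpos hω).congr' ?_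
  filter_upwards [eventually_ne_atTop 0] with n hn
  field_simp

lemma ae_tendsto_prod_range_atTop_of_integral_log_pos {Ω E : Type*} {mΩ : MeasurableSpace Ω}
    [MeasurableSpace E] {P : Measure Ω} {X : ℕ → Ω → E} {X₀ : Ω → E} {f : E → ℝ}
    (hf : Measurable f) (hindep : iIndepFun X P) (hident : ∀ i, IdentDistrib (X i) X₀ P P)
    (hfpos : ∀ᵐ ω ∂P, 0 < f (X₀ ω)) (hpos : 0 < ∫ ω, log (f (X₀ ω)) ∂P) :
    ∀ᵐ ω ∂P, Tendsto (fun n => ∏ i ∈ Finset.range n, f (X i ω)) atTop atTop := by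
  have hlogf : Measurable fun x => log (f x) := measurable_log.comp hf
  have hident' : ∀ i, IdentDistrib (fun ω => log (f (X i ω))) (fun ω => log (f (X₀ ω))) P P :=
    fun i => (hident i).comp hlogf
  have hsum := ae_tendsto_sum_range_atTop_of_integral_pos (Z := fun i ω => log (f (X i ω)))
    (fun i j hij => (hindep.indepFun hij).comp hlogf hlogf)
    (fun i => (hident' i).trans (hident' 0).symm) ((hident' 0).integral_eq ▸ hpos)
  have hXpos : ∀ᵐ ω ∂P, ∀ i, 0 < f (X i ω) := ae_all_iff.2 fun i =>
    (hident i).symm.ae_snd (p := fun x => 0 < f x) (measurableSet_lt measurable_const hf) hfpos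
  filter_upwards [hsum, hXpos] with ω hω hωpos
  refine (tendsto_exp_atTop.comp hω).congr fun n => ?_
  simp only [Function.comp_apply, exp_sum, exp_log (hωpos _)]

/-- Let `μ > 0` and let `X₀` be integrable with `X₀ ≥ 0` a.s. and `E[X₀] > μ`, and write
`lam c = E[log((1−c) + c·X₀/μ)]`.  Then there is `c_max > 0` with `lam c > 0` for all
`0 < c < c_max`; for any `0 < c < 1` with `lam c > 0` and any i.i.d. sample `X 0, X 1, …`
of `X₀`, the process `M n = ∏_{i<n} ((1−c) + c·X i/μ)` tends to `+∞` almost surely; and if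
moreover `P(X₀ = 0) > 0`, then `lam c → −∞` as `c ↑ 1`, so that the supremum of the set
where `lam > 0` within `(0,1)` is `< 1`. -/
theorem test_supermartingale_tendsto_top_under_alternative
    {Ω : Type*} {mΩ : MeasurableSpace Ω} (P : Measure Ω) [IsProbabilityMeasure P]
    (μ : ℝ) (hμ : 0 < μ)
    (X₀ : Ω → ℝ) (hX₀int : Integrable X₀ P) (hX₀pos : ∀ᵐ ω ∂P, 0 ≤ X₀ ω)
    (hEX₀ : μ < ∫ ω, X₀ ω ∂P)
    (lam : ℝ → ℝ)
    (hlam : ∀ c, lam c = ∫ ω, Real.log ((1 - c) + c * X₀ ω / μ) ∂P) :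
    (∃ cmax > (0 : ℝ), ∀ c, 0 < c → c < cmax → 0 < lam c) ∧
    (∀ c ∈ Set.Ioo (0 : ℝ) 1, 0 < lam c →
      ∀ X : ℕ → Ω → ℝ, iIndepFun X P →
        (∀ i, IdentDistrib (X i) X₀ P P) →
        ∀ᵐ ω ∂P, Tendsto
          (fun n => ∏ i ∈ Finset.range n, ((1 - c) + c * X i ω / μ)) atTop atTop) ∧
    (0 < P {ω | X₀ ω = 0} →
      Tendsto lam (nhdsWithin 1 (Set.Iio 1)) atBot ∧
        sSup {c : ℝ | c ∈ Set.Ioo (0 : ℝ) 1 ∧ 0 < lam c} < 1) := by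
  set Y : Ω → ℝ := fun ω => X₀ ω / μ - 1
  have hY : Integrable Y P := (hX₀int.div_const μ).sub (integrable_const 1)
  have hY1 : ∀ᵐ ω ∂P, -1 ≤ Y ω := hX₀pos.mono fun ω hω => by
    simpa [Y] using div_nonneg hω hμ.le
  have hlamY : lam = fun c => ∫ ω, log (1 + c * Y ω) ∂P := by
    ext c
    rw [hlam]
    congr with ω
    congr 1
    simp only [Y]
    ring
  refine ⟨?_, ?_, fun h0 => ?_⟩
  · have hEY : 0 < ∫ ω, Y ω ∂P := by
      rw [integral_sub (hX₀int.div_const μ) (integrable_const 1), integral_div, integral_const]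
      simpa using (one_lt_div hμ).2 hEX₀
    obtain ⟨ε, hε, hpos⟩ := exists_forall_integral_log_one_add_mul_pos hY hY1 hEY
    exact ⟨ε, hε, fun c hc hcε => hlamY ▸ hpos c ⟨hc, hcε⟩⟩
  · rintro c ⟨hc0, hc1⟩ hlamc X hindep hident
    refine ae_tendsto_prod_range_atTop_of_integral_log_pos
      (f := fun x => (1 - c) + c * x / μ) (by fun_prop) hindep hident ?_
      (hlam c ▸ hlamc)
    filter_upwards [hX₀pos] with ω hω
    exact add_pos_of_pos_of_nonneg (sub_pos.2 hc1) (by positivity)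
  · have hA : {ω | Y ω = -1} = {ω | X₀ ω = 0} := by
      ext ω
      simp [Y, hμ.ne']
    have hlim : Tendsto lam (𝓝[<] 1) atBot :=
      hlamY ▸ tendsto_integral_log_one_add_mul_atBot hY hY1 (hA ▸ h0)
    exact ⟨hlim, sSup_setOf_pos_lt_of_tendsto_atBot one_pos hlim⟩
end

section
/- Let X be a random variable with values in [0,1] and E[X] = μ where 0 < μ < 1, let X_1, …, X_n be an i.i.d. sample of X, let X̄ = (X_1 + ⋯ + X_n)/n, and let θ satisfy 0 < μ < θ < 1. Then P( X̄ ≥ θ ) ≤ ( (θ/μ)^θ · ((1−θ)/(1−μ))^{1−θ} )^{−n}. -/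
open MeasureTheory ProbabilityTheory Real Set

/-!
Chernoff's method. For `t ≥ 0`, Markov's inequality applied to `exp (t S)`, `S = X 0 + ⋯ + X (n-1)`,
gives `P(S ≥ nθ) ≤ exp (-t n θ) E[exp (t S)]`. Independence factors the moment generating
function, and convexity of `exp` bounds that of each `[0,1]`-valued summand with mean `μ` by
that of a Bernoulli variable, `1 - μ + μ exp t`. The choice `exp t = θ(1-μ)/(μ(1-θ))`, which
minimises `exp (-t θ) (1 - μ + μ exp t)`, turns the bound into the stated one.
-/

lemma exp_mul_le_one_sub_add_mul_exp {x : ℝ} (hx : x ∈ Icc (0 : ℝ) 1) (t : ℝ) :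
    exp (t * x) ≤ 1 - x + x * exp t := by
  have := convexOn_exp.2 (mem_univ 0) (mem_univ t) (sub_nonneg.2 hx.2) hx.1 (by ring)
  simpa [smul_eq_mul, mul_comm] using this

lemma exp_neg_mul_mul_one_sub_add_mul_exp {μ θ t : ℝ} (hμ : 0 < μ) (hμ1 : μ < 1)
    (hθ : 0 < θ) (hθ1 : θ < 1) (ht : exp t = θ * (1 - μ) / (μ * (1 - θ))) :
    exp (-t * θ) * (1 - μ + μ * exp t) = ((θ / μ) ^ θ * ((1 - θ) / (1 - μ)) ^ (1 - θ))⁻¹ := by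
  have h1μ : 0 < 1 - μ := by linarith
  have h1θ : 0 < 1 - θ := by linarith
  have hmix : 1 - μ + μ * exp t = (1 - μ) / (1 - θ) := by
    rw [ht]; field_simp; ring
  rw [hmix, neg_mul, exp_neg, exp_mul, ht,
    show θ * (1 - μ) / (μ * (1 - θ)) = θ / μ / ((1 - θ) / (1 - μ)) by field_simp,
    div_rpow (by positivity) (by positivity), rpow_sub (by positivity), rpow_one]
  field_simp

section

variable {Ω : Type*} {mΩ : MeasurableSpace Ω} {P : Measure Ω}

lemma mgf_le_of_ae_mem_Icc_zero_one [IsProbabilityMeasure P] {X : Ω → ℝ}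
    (hX : AEMeasurable X P) (h : ∀ᵐ ω ∂P, X ω ∈ Icc (0 : ℝ) 1) (t : ℝ) :
    mgf X P t ≤ 1 - P[X] + P[X] * exp t := by
  have hint := Integrable.of_mem_Icc 0 1 hX h
  calc mgf X P t ≤ ∫ ω, (1 - X ω + X ω * exp t) ∂P :=
        integral_mono_of_nonneg (.of_forall fun _ ↦ (exp_pos _).le)
          (((integrable_const 1).sub hint).add (hint.mul_const _))
          (h.mono fun ω hω ↦ exp_mul_le_one_sub_add_mul_exp hω t)
    _ = 1 - P[X] + P[X] * exp t := by
        rw [integral_add (f := fun ω ↦ 1 - X ω) ((integrable_const 1).sub hint)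
            (hint.mul_const _), integral_sub (integrable_const 1) hint, integral_mul_const]
        simp

lemma ProbabilityTheory.iIndepFun.measureReal_sum_ge_le_of_ae_mem_Icc_zero_one {ι : Type*}
    {X : ι → Ω → ℝ} (hindep : iIndepFun X P) (hmeas : ∀ i, AEMeasurable (X i) P)
    (hrange : ∀ i, ∀ᵐ ω ∂P, X i ω ∈ Icc (0 : ℝ) 1) {μ : ℝ} (hmean : ∀ i, P[X i] = μ)
    {t : ℝ} (ht : 0 ≤ t) (ε : ℝ) (s : Finset ι) :
    P.real {ω | ε ≤ ∑ i ∈ s, X i ω} ≤ exp (-t * ε) * (1 - μ + μ * exp t) ^ s.card := by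
  have := hindep.isProbabilityMeasure
  have hsum_mem : ∀ᵐ ω ∂P, (∑ i ∈ s, X i) ω ∈ Icc 0 (s.card : ℝ) := by
    filter_upwards [(Filter.eventually_all_finset s).2 fun i _ ↦ hrange i] with ω hω
    rw [Finset.sum_apply]
    exact ⟨Finset.sum_nonneg fun i hi ↦ (hω i hi).1,
      by simpa using Finset.sum_le_card_nsmul s (X · ω) 1 fun i hi ↦ (hω i hi).2⟩
  have hint := integrable_exp_mul_of_mem_Icc (t := t) (by fun_prop) hsum_mem
  calc P.real {ω | ε ≤ ∑ i ∈ s, X i ω}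
      = P.real {ω | ε ≤ (∑ i ∈ s, X i) ω} := by simp only [Finset.sum_apply]
    _ ≤ exp (-t * ε) * mgf (∑ i ∈ s, X i) P t := measure_ge_le_exp_mul_mgf ε ht hint
    _ = exp (-t * ε) * ∏ i ∈ s, mgf (X i) P t := by rw [hindep.mgf_sum₀ hmeas]
    _ ≤ exp (-t * ε) * (1 - μ + μ * exp t) ^ s.card := by
        gcongr
        rw [← Finset.prod_const]
        refine Finset.prod_le_prod (fun i _ ↦ mgf_nonneg) fun i _ ↦ ?_
        simpa [hmean i] using mgf_le_of_ae_mem_Icc_zero_one (hmeas i) (hrange i) t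

end

theorem hoeffding_inequality_general
    {Ω : Type*} {mΩ : MeasurableSpace Ω} (P : Measure Ω) [IsProbabilityMeasure P]
    (μ θ : ℝ) (hμ : 0 < μ) (hμθ : μ < θ) (hθ : θ < 1)
    (n : ℕ)
    (X : ℕ → Ω → ℝ)
    (hindep : iIndepFun X P)
    (hrange : ∀ i, ∀ᵐ ω ∂P, X i ω ∈ Set.Icc (0 : ℝ) 1)
    (hmean : ∀ i, ∫ ω, X i ω ∂P = μ) :
    (P {ω | θ ≤ (∑ i ∈ Finset.range n, X i ω) / n}).toReal ≤
      ((θ / μ) ^ θ * ((1 - θ) / (1 - μ)) ^ (1 - θ)) ^ (-(n : ℝ)) := by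
  have hθ0 : 0 < θ := hμ.trans hμθ
  have hμ1 : μ < 1 := hμθ.trans hθ
  have hodds : 1 ≤ θ * (1 - μ) / (μ * (1 - θ)) := by
    rw [one_le_div₀ (mul_pos hμ (by linarith))]; nlinarith
  set t := log (θ * (1 - μ) / (μ * (1 - θ)))
  have hmeas i : AEMeasurable (X i) P :=
    (Integrable.of_integral_ne_zero (by rw [hmean i]; exact hμ.ne')).aemeasurable
  have hsub : {ω | θ ≤ (∑ i ∈ Finset.range n, X i ω) / n} ⊆
      {ω | θ * n ≤ ∑ i ∈ Finset.range n, X i ω} := fun ω (hω : θ ≤ _) ↦ by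
    rcases n.eq_zero_or_pos with rfl | hn
    · simp only [CharP.cast_eq_zero, div_zero] at hω; linarith
    · exact (le_div_iff₀ (Nat.cast_pos.2 hn)).1 hω
  calc (P {ω | θ ≤ (∑ i ∈ Finset.range n, X i ω) / n}).toReal
      ≤ P.real {ω | θ * n ≤ ∑ i ∈ Finset.range n, X i ω} := measureReal_mono hsub
    _ ≤ exp (-t * (θ * n)) * (1 - μ + μ * exp t) ^ n := by
        simpa using hindep.measureReal_sum_ge_le_of_ae_mem_Icc_zero_one hmeas hrange hmean
          (log_nonneg hodds) (θ * n) (Finset.range n)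
    _ = (exp (-t * θ) * (1 - μ + μ * exp t)) ^ n := by rw [mul_pow, ← exp_nat_mul]; ring_nf
    _ = ((θ / μ) ^ θ * ((1 - θ) / (1 - μ)) ^ (1 - θ)) ^ (-(n : ℝ)) := by
        rw [exp_neg_mul_mul_one_sub_add_mul_exp hμ hμ1 hθ0 hθ (exp_log (by positivity)),
          rpow_neg (by positivity), rpow_natCast, inv_pow]

/-- **Hoeffding's inequality.**  Let `X 0, …, X (n-1)` be an i.i.d. sample of a random
variable with values in `[0,1]` and mean `μ`, let `X̄ = (X 0 + ⋯ + X (n-1))/n`, and let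
`0 < μ < θ < 1`.  Then `P(X̄ ≥ θ) ≤ ((θ/μ)^θ ((1−θ)/(1−μ))^(1−θ))^(−n)`. -/
theorem hoeffding_inequality
    {Ω : Type*} {mΩ : MeasurableSpace Ω} (P : Measure Ω) [IsProbabilityMeasure P]
    (μ θ : ℝ) (hμ : 0 < μ) (hμθ : μ < θ) (hθ : θ < 1)
    (n : ℕ) (hn : 1 ≤ n)
    (X : ℕ → Ω → ℝ)
    (hindep : iIndepFun X P)
    (hident : ∀ i j, IdentDistrib (X i) (X j) P P)
    (hrange : ∀ i, ∀ᵐ ω ∂P, X i ω ∈ Set.Icc (0 : ℝ) 1)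
    (hmean : ∀ i, ∫ ω, X i ω ∂P = μ) :
    (P {ω | θ ≤ (∑ i ∈ Finset.range n, X i ω) / n}).toReal ≤
      ((θ / μ) ^ θ * ((1 - θ) / (1 - μ)) ^ (1 - θ)) ^ (-(n : ℝ)) :=
  hoeffding_inequality_general (mΩ := mΩ) P μ θ hμ hμθ hθ n X hindep hrange hmean
end

section
/- Let ℓ : [0,∞) → ℝ be a three times continuously differentiable function with ℓ''(x) ≤ 0 and ℓ'''(x) ≥ 0 for all x ≥ 0. Let θ > 0 and σ > 0, let X be a random variable with X ≥ 0 almost surely, E[X] = θ and Var(X) ≤ σ², and assume E[ℓ(X)] exists. Set τ = (θ² + σ²)/θ and let X_0 be the two-point random variable with P(X_0 = τ) = θ/τ and P(X_0 = 0) = 1 − θ/τ. Then E[ℓ(X)] ≥ E[ℓ(X_0)] = (1 − θ/τ)·ℓ(0) + (θ/τ)·ℓ(τ). -/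
/-!
Let `q x = ℓ 0 + β x + c x²` agree with `ℓ` at `0` and to first order at `τ`. Then `h = ℓ - q`
vanishes at `0` and doubly at `τ`, so Rolle applied twice gives `ξ ∈ (0, τ)` with `h'' ξ = 0`.
As `h'' = ℓ'' - 2c` is nondecreasing, `h` is convex on `[ξ, ∞)` with a critical point at `τ`, and
concave on `[0, ξ]` with nonnegative values at both ends; hence `q ≤ ℓ` on `[0, ∞)`. Moreover
`2c = ℓ'' ξ ≤ 0`, so `E[q(X)]` can only decrease when `E[X²] ≤ θ² + σ²` is replaced by
`θ² + σ² = θτ`, the second moment of `X₀`; and `E[q(X₀)] = E[ℓ(X₀)]` since `q = ℓ` on `{0, τ}`.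
-/

open Set Topology MeasureTheory ProbabilityTheory

lemma ConvexOn.le_of_hasDerivAt_eq_zero {f : ℝ → ℝ} {s : Set ℝ} (hf : ConvexOn ℝ s f) {x y : ℝ}
    (hx : x ∈ s) (hy : y ∈ s) (hfx : HasDerivAt f 0 x) : f x ≤ f y := by
  rcases lt_trichotomy y x with hyx | rfl | hxy
  · have := hf.slope_le_of_hasDerivAt hy hx hyx hfx
    rw [slope_def_field, div_le_iff₀ (sub_pos.2 hyx)] at this
    linarith
  · exact le_rfl
  · have := hf.le_slope_of_hasDerivAt hx hy hxy hfx
    rw [slope_def_field, le_div_iff₀ (sub_pos.2 hxy)] at this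
    linarith

section DoubleRoot

variable {f f' f'' : ℝ → ℝ} {a b : ℝ}

lemma exists_hasDerivAt2_eq_zero (hf : ContinuousOn f (Ici a))
    (hf' : ∀ x ∈ Ioi a, HasDerivAt f (f' x) x) (hf'' : ∀ x ∈ Ioi a, HasDerivAt f' (f'' x) x)
    (hab : a < b) (hfab : f a = f b) (hf'b : f' b = 0) : ∃ ξ ∈ Ioo a b, f'' ξ = 0 := by
  obtain ⟨η, hη, hf'η⟩ := exists_hasDerivAt_eq_zero hab (hf.mono Icc_subset_Ici_self) hfab
    fun x hx => hf' x hx.1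
  have hf'_cont : ContinuousOn f' (Icc η b) := fun x hx =>
    (hf'' x (hη.1.trans_le hx.1)).continuousAt.continuousWithinAt
  obtain ⟨ξ, hξ, hf''ξ⟩ := exists_hasDerivAt_eq_zero hη.2 hf'_cont (hf'η.trans hf'b.symm)
    fun x hx => hf'' x (hη.1.trans hx.1)
  exact ⟨ξ, ⟨hη.1.trans hξ.1, hξ.2⟩, hf''ξ⟩

lemma nonneg_of_root_of_double_root_of_monotoneOn_deriv2 (hf : ContinuousOn f (Ici a))
    (hf' : ∀ x ∈ Ioi a, HasDerivAt f (f' x) x) (hf'' : ∀ x ∈ Ioi a, HasDerivAt f' (f'' x) x)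
    (hmono : MonotoneOn f'' (Ioi a)) (hab : a < b) (hfa : f a = 0) (hfb : f b = 0)
    (hf'b : f' b = 0) {x : ℝ} (hx : a ≤ x) : 0 ≤ f x := by
  obtain ⟨ξ, hξ, hf''ξ⟩ :=
    exists_hasDerivAt2_eq_zero hf hf' hf'' hab (hfa.trans hfb.symm) hf'b
  have hconvex : ConvexOn ℝ (Ici ξ) f := by
    refine convexOn_of_hasDerivWithinAt2_nonneg (f' := f') (f'' := f'') (convex_Ici ξ)
      (fun y hy => (hf' y (hξ.1.trans_le hy)).continuousAt.continuousWithinAt) ?_ ?_ ?_ <;>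
      rw [interior_Ici] <;> intro y hy
    · exact (hf' y (hξ.1.trans hy)).hasDerivWithinAt
    · exact (hf'' y (hξ.1.trans hy)).hasDerivWithinAt
    · exact hf''ξ ▸ hmono hξ.1 (hξ.1.trans hy) hy.le
  have hconcave : ConcaveOn ℝ (Icc a ξ) f := by
    refine concaveOn_of_hasDerivWithinAt2_nonpos (f' := f') (f'' := f'') (convex_Icc a ξ)
      (hf.mono Icc_subset_Ici_self) ?_ ?_ ?_ <;> rw [interior_Icc] <;> intro y hy
    · exact (hf' y hy.1).hasDerivWithinAt
    · exact (hf'' y hy.1).hasDerivWithinAt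
    · exact hf''ξ ▸ hmono hy.1 hξ.1 hy.2.le
  have hright : ∀ y, ξ ≤ y → 0 ≤ f y := fun y hy =>
    hfb ▸ hconvex.le_of_hasDerivAt_eq_zero (mem_Ici.2 hξ.2.le) (mem_Ici.2 hy)
      (hf'b ▸ hf' b (hξ.1.trans hξ.2))
  rcases le_total ξ x with hξx | hxξ
  · exact hright x hξx
  · have := hconcave.ge_on_segment (left_mem_Icc.2 hξ.1.le) (right_mem_Icc.2 hξ.1.le)
      (segment_eq_Icc hξ.1.le ▸ ⟨hx, hxξ⟩ : x ∈ segment ℝ a ξ)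
    rw [hfa] at this
    exact (le_min le_rfl (hright ξ le_rfl)).trans this

end DoubleRoot

lemma ContDiffOn.hasDerivAt_iteratedDerivWithin {f : ℝ → ℝ} {s : Set ℝ} {n : WithTop ℕ∞}
    {k : ℕ} {x : ℝ} (hf : ContDiffOn ℝ n f s) (hs : UniqueDiffOn ℝ s) (hk : k < n)
    (hx : s ∈ 𝓝 x) :
    HasDerivAt (iteratedDerivWithin k f s) (iteratedDerivWithin (k + 1) f s x) x := by
  rw [iteratedDerivWithin_succ, derivWithin_of_mem_nhds hx]
  exact ((hf.differentiableOn_iteratedDerivWithin hk hs) x (mem_of_mem_nhds hx)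
    |>.differentiableAt hx).hasDerivAt

lemma exists_quadratic_le_of_deriv3_nonneg {ℓ : ℝ → ℝ} (hℓ : ContDiffOn ℝ 3 ℓ (Ici 0))
    (hℓ'' : ∀ x ∈ Ioi (0 : ℝ), iteratedDerivWithin 2 ℓ (Ici 0) x ≤ 0)
    (hℓ''' : ∀ x ∈ Ioi (0 : ℝ), 0 ≤ iteratedDerivWithin 3 ℓ (Ici 0) x) {τ : ℝ} (hτ : 0 < τ) :
    ∃ β c : ℝ, c ≤ 0 ∧ ℓ 0 + β * τ + c * τ ^ 2 = ℓ τ ∧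
      ∀ x, 0 ≤ x → ℓ 0 + β * x + c * x ^ 2 ≤ ℓ x := by
  set D : ℕ → ℝ → ℝ := fun k => iteratedDerivWithin k ℓ (Ici 0)
  have hD : ∀ k < 3, ∀ x ∈ Ioi (0 : ℝ), HasDerivAt (D k) (D (k + 1) x) x := fun k hk x hx =>
    hℓ.hasDerivAt_iteratedDerivWithin (uniqueDiffOn_Ici 0) (by exact_mod_cast hk)
      (Ici_mem_nhds hx)
  have hℓ' : ∀ x ∈ Ioi (0 : ℝ), HasDerivAt ℓ (D 1 x) x := fun x hx => by
    simpa only [D, iteratedDerivWithin_zero, zero_add] using hD 0 (by norm_num) x hx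
  set c := (ℓ 0 + τ * D 1 τ - ℓ τ) / τ ^ 2
  set β := D 1 τ - 2 * c * τ
  set h : ℝ → ℝ := fun x => ℓ x - (ℓ 0 + β * x + c * x ^ 2)
  have hh' : ∀ x ∈ Ioi (0 : ℝ), HasDerivAt h (D 1 x - (β + 2 * c * x)) x := fun x hx =>
    (hℓ' x hx).sub <| (((hasDerivAt_id' x).const_mul β).const_add (ℓ 0)).fun_add
      ((hasDerivAt_pow 2 x).const_mul c) |>.congr_deriv (by ring)
  have hh'' : ∀ x ∈ Ioi (0 : ℝ),
      HasDerivAt (fun x => D 1 x - (β + 2 * c * x)) (D 2 x - 2 * c) x := fun x hx =>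
    (hD 1 (by norm_num) x hx).sub <|
      ((hasDerivAt_id' x).const_mul (2 * c)).const_add β |>.congr_deriv (mul_one _)
  have hmono : MonotoneOn (fun x => D 2 x - 2 * c) (Ioi 0) := by
    refine monotoneOn_of_hasDerivWithinAt_nonneg (f' := D 3) (convex_Ioi 0)
      (fun x hx => ((hD 2 (by norm_num) x hx).sub_const _).continuousAt.continuousWithinAt)
      ?_ ?_ <;> rw [interior_Ioi] <;> intro x hx
    · exact ((hD 2 (by norm_num) x hx).sub_const _).hasDerivWithinAt
    · exact hℓ''' x hx
  have hh_cont : ContinuousOn h (Ici 0) := hℓ.continuousOn.sub (by fun_prop)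
  have hh0 : h 0 = 0 := by simp [h]
  have hhτ : h τ = 0 := by simp only [h, β, c]; field_simp; ring
  have hh'τ : D 1 τ - (β + 2 * c * τ) = 0 := by ring
  obtain ⟨ξ, hξ, hh''ξ⟩ :=
    exists_hasDerivAt2_eq_zero hh_cont hh' hh'' hτ (hh0.trans hhτ.symm) hh'τ
  refine ⟨β, c, ?_, by linarith [hhτ], fun x hx => ?_⟩
  · linarith [hℓ'' ξ hξ.1]
  · linarith [nonneg_of_root_of_double_root_of_monotoneOn_deriv2 hh_cont hh' hh'' hmono hτ
      hh0 hhτ hh'τ hx]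

lemma le_integral_of_quadratic_le {Ω : Type*} {mΩ : MeasurableSpace Ω} {P : Measure Ω}
    [IsProbabilityMeasure P] {X : Ω → ℝ} {f : ℝ → ℝ} (hX : MemLp X 2 P)
    (hf : Integrable (fun ω => f (X ω)) P) {α β c m : ℝ} (hc : c ≤ 0) (hm : P[X ^ 2] ≤ m)
    (hle : ∀ᵐ ω ∂P, α + β * X ω + c * X ω ^ 2 ≤ f (X ω)) :
    α + β * P[X] + c * m ≤ ∫ ω, f (X ω) ∂P := by
  have hX1 : Integrable X P := hX.integrable one_le_two
  have hX2 : Integrable (fun ω => X ω ^ 2) P := hX.integrable_sq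
  calc α + β * P[X] + c * m ≤ α + β * P[X] + c * P[X ^ 2] := by
        gcongr _ + ?_; exact mul_le_mul_of_nonpos_left hm hc
    _ = ∫ ω, α + β * X ω + c * X ω ^ 2 ∂P := by
        rw [integral_add (f := fun ω => α + β * X ω) ((integrable_const α).add (hX1.const_mul β))
            (hX2.const_mul c),
          integral_add (f := fun _ => α) (integrable_const α) (hX1.const_mul β), integral_const,
          integral_const_mul, integral_const_mul]
        simp
    _ ≤ ∫ ω, f (X ω) ∂P :=
        integral_mono_ae (((integrable_const α).add (hX1.const_mul β)).add (hX2.const_mul c))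
          hf hle

theorem expectation_ge_two_point_worst_case_general
    {Ω : Type*} {mΩ : MeasurableSpace Ω} (P : Measure Ω) [IsProbabilityMeasure P]
    (ℓ : ℝ → ℝ)
    (hℓC3 : ContDiffOn ℝ 3 ℓ (Set.Ici (0 : ℝ)))
    (hℓ'' : ∀ x : ℝ, 0 ≤ x → iteratedDerivWithin 2 ℓ (Set.Ici (0 : ℝ)) x ≤ 0)
    (hℓ''' : ∀ x : ℝ, 0 ≤ x → 0 ≤ iteratedDerivWithin 3 ℓ (Set.Ici (0 : ℝ)) x)
    (θ σ : ℝ) (hθ : 0 < θ)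
    (X : Ω → ℝ) (hXsq : MemLp X 2 P) (hXpos : ∀ᵐ ω ∂P, 0 ≤ X ω)
    (hEX : ∫ ω, X ω ∂P = θ) (hVar : variance X P ≤ σ ^ 2)
    (hℓXint : Integrable (fun ω => ℓ (X ω)) P)
    (τ : ℝ) (hτ : τ = (θ ^ 2 + σ ^ 2) / θ) :
    (1 - θ / τ) * ℓ 0 + (θ / τ) * ℓ τ ≤ ∫ ω, ℓ (X ω) ∂P := by
  have hτpos : 0 < τ := hτ ▸ by positivity
  obtain ⟨β, c, hc, hqτ, hq⟩ := exists_quadratic_le_of_deriv3_nonneg hℓC3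
    (fun x hx => hℓ'' x (le_of_lt hx)) (fun x hx => hℓ''' x (le_of_lt hx)) hτpos
  have hmoment : P[X ^ 2] ≤ θ * τ := by
    have hvar := variance_eq_sub hXsq
    rw [hEX] at hvar
    rw [hτ, mul_div_cancel₀ _ hθ.ne']
    linarith
  have hbound := le_integral_of_quadratic_le hXsq hℓXint hc hmoment
    (hXpos.mono fun ω hω => hq (X ω) hω)
  rw [hEX] at hbound
  calc (1 - θ / τ) * ℓ 0 + (θ / τ) * ℓ τ = ℓ 0 + β * θ + c * (θ * τ) := by
        rw [← hqτ]; field_simp; ring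
    _ ≤ ∫ ω, ℓ (X ω) ∂P := hbound

/-- Let `ℓ : [0,∞) → ℝ` be three times continuously differentiable with `ℓ'' ≤ 0` and
`ℓ''' ≥ 0` on `[0,∞)`.  Let `X ≥ 0` a.s. with `E[X] = θ > 0` and `Var(X) ≤ σ²`, and assume
`E[ℓ(X)]` exists.  With `τ = (θ² + σ²)/θ`, the two-point random variable `X₀` taking the
value `τ` with probability `θ/τ` and `0` with probability `1 − θ/τ` satisfies
`E[ℓ(X)] ≥ E[ℓ(X₀)] = (1 − θ/τ)·ℓ(0) + (θ/τ)·ℓ(τ)`. -/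
theorem expectation_ge_two_point_worst_case
    {Ω : Type*} {mΩ : MeasurableSpace Ω} (P : Measure Ω) [IsProbabilityMeasure P]
    (ℓ : ℝ → ℝ)
    (hℓC3 : ContDiffOn ℝ 3 ℓ (Set.Ici (0 : ℝ)))
    (hℓ'' : ∀ x : ℝ, 0 ≤ x → iteratedDerivWithin 2 ℓ (Set.Ici (0 : ℝ)) x ≤ 0)
    (hℓ''' : ∀ x : ℝ, 0 ≤ x → 0 ≤ iteratedDerivWithin 3 ℓ (Set.Ici (0 : ℝ)) x)
    (θ σ : ℝ) (hθ : 0 < θ) (hσ : 0 < σ)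
    (X : Ω → ℝ) (hXsq : MemLp X 2 P) (hXpos : ∀ᵐ ω ∂P, 0 ≤ X ω)
    (hEX : ∫ ω, X ω ∂P = θ) (hVar : variance X P ≤ σ ^ 2)
    (hℓXint : Integrable (fun ω => ℓ (X ω)) P)
    (τ : ℝ) (hτ : τ = (θ ^ 2 + σ ^ 2) / θ) :
    (1 - θ / τ) * ℓ 0 + (θ / τ) * ℓ τ ≤ ∫ ω, ℓ (X ω) ∂P :=
  expectation_ge_two_point_worst_case_general (mΩ := mΩ) P ℓ hℓC3 hℓ'' hℓ''' θ σ hθ X hXsq hXpos hEX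
    hVar hℓXint τ hτ
end

section
/- Let T be a random variable with 0 ≤ T ≤ 1 almost surely, E[T] = μ with 0 < μ < 1, and P(T = μ) < 1. Let 0 < c < 1 and 0 < α < 1, let T_1, T_2, … be an i.i.d. sample of T, and let M_k = ∏_{i=1}^k ((1−c) + c·(1−T_i)/(1−μ)). Then the probability of Type I error, P( ∃ k, M_k ≥ 1/α ), is at most α and greater than α/((1−c) + c/(1−μ)); moreover α/((1−c) + c/(1−μ)) > α·(1−μ). -/
/-!
Write `M k = ∏_{i<k} f i` with the i.i.d. factors `f i = (1 - c) + c (1 - T i) / (1 - μ)`, which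
have mean one and take values in `[1 - c, B]`, `B = (1 - c) + c / (1 - μ)`. Stopped at the first
time `τ` at which it reaches `r = 1 / α`, `M` keeps mean one (each increment `f k - 1` is
independent of the past and centred), and it stays below `B r` because its last factor is at most
`B`. Since `log y < y - 1` for `y ≠ 1` and `T` is not a.s. constant, `E[log f 0] < 0`, so by the
strong law `M k → 0` a.s.; dominated convergence then gives `E[M τ; τ < ∞] = 1`. As
`r ≤ M τ < B r` on `{τ < ∞}`, this yields `r P(τ < ∞) ≤ 1 < B r P(τ < ∞)`. Finally
`(1 - μ) B = 1 - μ (1 - c) < 1`.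
-/

open MeasureTheory ProbabilityTheory Filter Finset Topology

section StoppedProduct

variable (x : ℕ → ℝ) (r : ℝ)

/-- `M (min k τ)` for `M k = ∏_{i<k} x i` and `τ` the first time with `r ≤ M τ`. -/
noncomputable def stoppedProd (k : ℕ) : ℝ :=
  ∏ i ∈ range k, if ∀ j ≤ i, ∏ l ∈ range j, x l < r then x i else 1

open Classical in
noncomputable def prodAtFirstHit : ℝ :=
  if h : ∃ n, r ≤ ∏ l ∈ range n, x l then ∏ l ∈ range (Nat.find h), x l else 0

lemma stoppedProd_succ (k : ℕ) :
    stoppedProd x r (k + 1) = stoppedProd x r k +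
      (if ∀ j ≤ k, ∏ l ∈ range j, x l < r then stoppedProd x r k else 0) * (x k - 1) := by
  rw [stoppedProd, prod_range_succ, ← stoppedProd]
  split_ifs <;> ring

lemma stoppedProd_eq_prod {k : ℕ} (h : ∀ j < k, ∏ l ∈ range j, x l < r) :
    stoppedProd x r k = ∏ l ∈ range k, x l :=
  prod_congr rfl fun _ hi => if_pos fun j hj => h j (hj.trans_lt (mem_range.1 hi))

lemma stoppedProd_eq_of_first_hit {n k : ℕ} (hn : r ≤ ∏ l ∈ range n, x l)
    (hmin : ∀ j < n, ∏ l ∈ range j, x l < r) (hk : n ≤ k) :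
    stoppedProd x r k = ∏ l ∈ range n, x l := by
  induction k, hk using Nat.le_induction with
  | base => exact stoppedProd_eq_prod x r hmin
  | succ k hk ih =>
    rw [stoppedProd, prod_range_succ, ← stoppedProd, ih,
      if_neg fun h => (h n hk).not_ge hn, mul_one]

lemma tendsto_stoppedProd (h0 : Tendsto (fun k => ∏ l ∈ range k, x l) atTop (𝓝 0)) :
    Tendsto (stoppedProd x r) atTop (𝓝 (prodAtFirstHit x r)) := by
  rw [prodAtFirstHit]
  split_ifs with h
  · refine tendsto_const_nhds.congr' ((eventually_ge_atTop (Nat.find h)).mono fun k hk => ?_)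
    exact (stoppedProd_eq_of_first_hit x r (Nat.find_spec h)
      (fun j hj => lt_of_not_ge (Nat.find_min h hj)) hk).symm
  · simp only [not_exists, not_le] at h
    exact h0.congr fun k => (stoppedProd_eq_prod x r fun j _ => h j).symm

variable {x} {B : ℝ}

lemma prod_range_succ_lt (hx : ∀ i, x i ∈ Set.Icc 0 B) (hB : 0 < B) {k : ℕ}
    (hk : ∏ l ∈ range k, x l < r) : ∏ l ∈ range (k + 1), x l < B * r := by
  rw [prod_range_succ, mul_comm B]
  calc (∏ l ∈ range k, x l) * x k ≤ (∏ l ∈ range k, x l) * B :=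
        mul_le_mul_of_nonneg_left (hx k).2 (prod_nonneg fun l _ => (hx l).1)
    _ < r * B := mul_lt_mul_of_pos_right hk hB

lemma stoppedProd_nonneg (hx : ∀ i, 0 ≤ x i) (k : ℕ) : 0 ≤ stoppedProd x r k :=
  prod_nonneg fun i _ => by split_ifs; exacts [hx i, zero_le_one]

lemma stoppedProd_le (hx : ∀ i, x i ∈ Set.Icc 0 B) (hB : 1 ≤ B) (hr : 1 ≤ r) :
    ∀ k, stoppedProd x r k ≤ B * r
  | 0 => by simpa [stoppedProd] using one_le_mul_of_one_le_of_one_le hB hr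
  | k + 1 => by
    rw [stoppedProd, prod_range_succ, ← stoppedProd]
    split_ifs with h
    · rw [stoppedProd_eq_prod x r fun j hj => h j hj.le, ← prod_range_succ]
      exact (prod_range_succ_lt r hx (by linarith) (h k le_rfl)).le
    · rw [mul_one]
      exact stoppedProd_le hx hB hr k

lemma norm_stoppedProd_le (hx : ∀ i, x i ∈ Set.Icc 0 B) (hB : 1 ≤ B) (hr : 1 ≤ r) (k : ℕ) :
    ‖stoppedProd x r k‖ ≤ B * r := by
  rw [Real.norm_eq_abs, abs_of_nonneg (stoppedProd_nonneg r (fun i => (hx i).1) k)]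
  exact stoppedProd_le r hx hB hr k

lemma prodAtFirstHit_mem_Ico (hx : ∀ i, x i ∈ Set.Icc 0 B) (hB : 0 < B) (hr : 1 < r)
    (h : ∃ n, r ≤ ∏ l ∈ range n, x l) : prodAtFirstHit x r ∈ Set.Ico r (B * r) := by
  rw [prodAtFirstHit, dif_pos h]
  refine ⟨Nat.find_spec h, ?_⟩
  obtain ⟨m, hm⟩ : ∃ m, Nat.find h = m + 1 := Nat.exists_eq_succ_of_ne_zero fun h0 => by
    simpa [h0] using hr.trans_le (Nat.find_spec h)
  rw [hm]
  exact prod_range_succ_lt r hx hB (lt_of_not_ge (Nat.find_min h (hm ▸ m.lt_succ_self)))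

end StoppedProduct

lemma tendsto_atBot_of_tendsto_div_neg {s : ℕ → ℝ} {l : ℝ} (hl : l < 0)
    (h : Tendsto (fun n => s n / n) atTop (𝓝 l)) : Tendsto s atTop atBot :=
  (h.neg_mul_atTop hl tendsto_natCast_atTop_atTop).congr'
    ((eventually_ne_atTop 0).mono fun _ hn => div_mul_cancel₀ _ (Nat.cast_ne_zero.2 hn))

section Measurability

variable {Ω : Type*} {m : MeasurableSpace Ω} {f : ℕ → Ω → ℝ} {k : ℕ}

lemma measurableSet_forall_prod_lt (hf : ∀ i < k, Measurable[m] (f i)) (r : ℝ) :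
    MeasurableSet[m] {ω | ∀ j ≤ k, ∏ l ∈ range j, f l ω < r} := by
  simp_rw [Set.ofPred_forall]
  exact MeasurableSet.iInter fun j => MeasurableSet.iInter fun hj =>
    measurableSet_lt (Finset.measurable_prod _ fun l hl => hf l ((mem_range.1 hl).trans_le hj))
      measurable_const

lemma measurable_stoppedProd (hf : ∀ i < k, Measurable[m] (f i)) (r : ℝ) :
    Measurable[m] fun ω => stoppedProd (f · ω) r k :=
  Finset.measurable_prod _ fun i hi => Measurable.ite
    (measurableSet_forall_prod_lt (fun l hl => hf l (hl.trans (mem_range.1 hi))) r)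
    (hf i (mem_range.1 hi)) measurable_const

end Measurability

section Probability

variable {Ω : Type*} {mΩ : MeasurableSpace Ω} {P : Measure Ω}

lemma ProbabilityTheory.iIndepFun.indepFun_of_measurable_iSup {ι β γ : Type*}
    [mβ : MeasurableSpace β] [MeasurableSpace γ] {f : ι → Ω → β} (hf : ∀ i, Measurable (f i))
    (hind : iIndepFun f P) {S : Set ι} {k : ι} (hk : k ∉ S) {g : Ω → γ}
    (hg : Measurable[⨆ i ∈ S, mβ.comap (f i)] g) : IndepFun g (f k) P := by
  rw [IndepFun_iff_Indep]
  have h := indep_iSup_of_disjoint (fun i => (hf i).comap_le) hind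
    (Set.disjoint_singleton_right.2 hk)
  refine indep_of_indep_of_le_right (indep_of_indep_of_le_left h hg.comap_le) ?_
  exact le_iSup₂ (f := fun i (_ : i ∈ ({k} : Set ι)) => mβ.comap (f i)) k rfl

lemma ProbabilityTheory.IdentDistrib.not_ae_eq_const [IsProbabilityMeasure P] {X Y : Ω → ℝ}
    (h : IdentDistrib X Y P P) {t : ℝ} (hY : P {ω | Y ω = t} < 1) : ¬ ∀ᵐ ω ∂P, X ω = t := by
  rw [ae_iff_measure_eq (p := fun ω => X ω = t)
    (h.aemeasurable_fst.nullMeasurable (measurableSet_singleton t)), measure_univ]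
  exact fun hX => hY.ne ((h.measure_mem_eq (measurableSet_singleton t)).symm.trans hX)

lemma integral_lt_integral_of_ae_le_of_measure_ne_zero {f g : Ω → ℝ} (hf : Integrable f P)
    (hg : Integrable g P) (hle : f ≤ᵐ[P] g) (hlt : P {ω | f ω < g ω} ≠ 0) :
    ∫ ω, f ω ∂P < ∫ ω, g ω ∂P := by
  rw [← sub_pos, ← integral_sub hg hf,
    integral_pos_iff_support_of_nonneg_ae (hle.mono fun _ h => sub_nonneg.2 h) (hg.sub hf)]
  exact pos_iff_ne_zero.2 fun h0 =>
    hlt (measure_mono_null (fun ω hω => sub_ne_zero.2 (ne_of_gt hω)) h0)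

lemma integral_log_neg [IsProbabilityMeasure P] {Y : Ω → ℝ} (hpos : ∀ᵐ ω ∂P, 0 < Y ω)
    (hY : Integrable Y P) (hlog : Integrable (fun ω => Real.log (Y ω)) P)
    (hmean : ∫ ω, Y ω ∂P = 1) (hne : ¬ Y =ᵐ[P] 1) : ∫ ω, Real.log (Y ω) ∂P < 0 := by
  have hlt : P {ω | Real.log (Y ω) < Y ω - 1} ≠ 0 := fun h0 => hne <| ae_iff.2 <|
    measure_mono_null_ae (by
      filter_upwards [hpos] with ω hω h1
      exact Real.log_lt_sub_one_of_pos hω h1) h0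
  calc ∫ ω, Real.log (Y ω) ∂P < ∫ ω, (Y ω - 1) ∂P :=
        integral_lt_integral_of_ae_le_of_measure_ne_zero hlog (hY.sub (integrable_const 1))
          (hpos.mono fun _ h => Real.log_le_sub_one_of_pos h) hlt
    _ = 0 := by simp [integral_sub hY (integrable_const 1), hmean]

lemma measureReal_bounds_of_integral_eq_one [IsFiniteMeasure P] {L : Ω → ℝ} {A : Set Ω}
    {r K : ℝ} (hA : MeasurableSet A) (hL : Integrable L P) (hint : ∫ ω, L ω ∂P = 1)
    (hLA : ∀ᵐ ω ∂P, ω ∈ A → L ω ∈ Set.Ico r K) (hLAc : ∀ ω ∉ A, L ω = 0) :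
    P.real A * r ≤ 1 ∧ 1 < P.real A * K := by
  have hind : ∀ c : ℝ, ∫ ω, A.indicator (fun _ => c) ω ∂P = P.real A * c := fun c => by
    rw [integral_indicator_const c hA, smul_eq_mul]
  constructor
  · rw [← hind, ← hint]
    refine integral_mono_ae ((integrable_const r).indicator hA) hL ?_
    filter_upwards [hLA] with ω hω
    by_cases h : ω ∈ A
    · simpa [h] using (hω h).1
    · simp [h, hLAc ω h]
  · have hA0 : P A ≠ 0 := fun h0 => by
      have hL0 : L =ᵐ[P] 0 := (measure_eq_zero_iff_ae_notMem.1 h0).mono hLAc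
      simp [integral_congr_ae hL0] at hint
    rw [← hind, ← hint]
    refine integral_lt_integral_of_ae_le_of_measure_ne_zero hL
      ((integrable_const K).indicator hA) ?_ fun h0 => hA0 (measure_mono_null_ae ?_ h0)
    · filter_upwards [hLA] with ω hω
      by_cases h : ω ∈ A
      · simpa [h] using (hω h).2.le
      · simp [h, hLAc ω h]
    · filter_upwards [hLA] with ω hω h
      change L ω < A.indicator (fun _ => K) ω
      rw [Set.indicator_of_mem h]
      exact (hω h).2

variable {f : ℕ → Ω → ℝ} {a B r : ℝ}

lemma ae_tendsto_prod_zero_of_integral_log_neg (hind : iIndepFun f P)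
    (hident : ∀ i, IdentDistrib (f i) (f 0) P P) (hpos : ∀ᵐ ω ∂P, ∀ i, 0 < f i ω)
    (hlog : Integrable (fun ω => Real.log (f 0 ω)) P) (hneg : ∫ ω, Real.log (f 0 ω) ∂P < 0) :
    ∀ᵐ ω ∂P, Tendsto (fun k => ∏ i ∈ range k, f i ω) atTop (𝓝 0) := by
  have hslln := strong_law_ae_real (fun i ω => Real.log (f i ω)) hlog
    (fun i j hij => (hind.indepFun hij).comp Real.measurable_log Real.measurable_log)
    (fun i => (hident i).comp Real.measurable_log)
  filter_upwards [hslln, hpos] with ω hω hωpos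
  refine (Real.tendsto_exp_atBot.comp (tendsto_atBot_of_tendsto_div_neg hneg hω)).congr
    fun k => ?_
  simp [Real.exp_sum, Real.exp_log (hωpos _)]

lemma indepFun_stoppedProd_weight (hf : ∀ i, Measurable (f i)) (hind : iIndepFun f P) (k : ℕ) :
    IndepFun (fun ω => if ∀ j ≤ k, ∏ l ∈ range j, f l ω < r then stoppedProd (f · ω) r k else 0)
      (f k) P := by
  refine hind.indepFun_of_measurable_iSup hf (S := Set.Iio k) (lt_irrefl k) ?_
  have hpast : ∀ i < k, Measurable[⨆ i ∈ Set.Iio k, MeasurableSpace.comap (f i) inferInstance]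
      (f i) := fun i hi => measurable_iff_comap_le.2
    (le_iSup₂ (f := fun i (_ : i ∈ Set.Iio k) => MeasurableSpace.comap (f i) inferInstance) i hi)
  exact Measurable.ite (measurableSet_forall_prod_lt hpast r) (measurable_stoppedProd hpast r)
    measurable_const

variable [IsProbabilityMeasure P]

lemma integral_stoppedProd (hf : ∀ i, Measurable (f i)) (hind : iIndepFun f P)
    (hbound : ∀ᵐ ω ∂P, ∀ i, f i ω ∈ Set.Icc 0 B) (hmean : ∀ i, ∫ ω, f i ω ∂P = 1) (hB : 1 ≤ B)
    (hr : 1 ≤ r) (k : ℕ) : ∫ ω, stoppedProd (f · ω) r k ∂P = 1 := by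
  have hint : ∀ k, Integrable (fun ω => stoppedProd (f · ω) r k) P := fun k =>
    .of_bound (measurable_stoppedProd (fun i _ => hf i) r).aestronglyMeasurable (B * r)
      (hbound.mono fun _ hω => norm_stoppedProd_le r hω hB hr k)
  induction k with
  | zero => simp [stoppedProd]
  | succ k ih =>
    set G := fun ω =>
      if ∀ j ≤ k, ∏ l ∈ range j, f l ω < r then stoppedProd (f · ω) r k else 0
    have hindep : IndepFun G (fun ω => f k ω - 1) P :=
      (indepFun_stoppedProd_weight hf hind k).comp measurable_id (measurable_id.sub_const 1)
    have hGint : Integrable G P := (hint k).mono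
      (Measurable.ite (measurableSet_forall_prod_lt (fun i _ => hf i) r)
        (measurable_stoppedProd (fun i _ => hf i) r) measurable_const).aestronglyMeasurable
      (ae_of_all _ fun ω => by dsimp only [G]; split_ifs <;> simp)
    have hfk : Integrable (f k) P := .of_bound (hf k).aestronglyMeasurable B
      (hbound.mono fun _ hω => by rw [Real.norm_of_nonneg (hω k).1]; exact (hω k).2)
    have hfk1 : Integrable (fun ω => f k ω - 1) P := hfk.sub (integrable_const 1)
    have hGfk : Integrable (fun ω => G ω * (f k ω - 1)) P := hindep.integrable_mul hGint hfk1
    calc ∫ ω, stoppedProd (f · ω) r (k + 1) ∂P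
        = ∫ ω, (stoppedProd (f · ω) r k + G ω * (f k ω - 1)) ∂P := by
          simp_rw [stoppedProd_succ]
          rfl
      _ = 1 := by
          rw [integral_add (hint k) hGfk, ih,
            hindep.integral_fun_mul_eq_mul_integral hGint.1 hfk1.1,
            integral_sub hfk (integrable_const 1)]
          simp [hmean k]

lemma integral_prodAtFirstHit (hf : ∀ i, Measurable (f i)) (hind : iIndepFun f P)
    (hbound : ∀ᵐ ω ∂P, ∀ i, f i ω ∈ Set.Icc 0 B) (hmean : ∀ i, ∫ ω, f i ω ∂P = 1) (hB : 1 ≤ B)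
    (hr : 1 ≤ r) (h0 : ∀ᵐ ω ∂P, Tendsto (fun k => ∏ i ∈ range k, f i ω) atTop (𝓝 0)) :
    Integrable (fun ω => prodAtFirstHit (f · ω) r) P ∧
      ∫ ω, prodAtFirstHit (f · ω) r ∂P = 1 := by
  have hS : ∀ k, AEStronglyMeasurable (fun ω => stoppedProd (f · ω) r k) P := fun k =>
    (measurable_stoppedProd (fun i _ => hf i) r).aestronglyMeasurable
  have hSle : ∀ᵐ ω ∂P, ∀ k, ‖stoppedProd (f · ω) r k‖ ≤ B * r :=
    hbound.mono fun _ h => norm_stoppedProd_le r h hB hr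
  have hlim : ∀ᵐ ω ∂P, Tendsto (stoppedProd (f · ω) r) atTop (𝓝 (prodAtFirstHit (f · ω) r)) :=
    h0.mono fun _ h => tendsto_stoppedProd _ r h
  refine ⟨.of_bound (aestronglyMeasurable_of_tendsto_ae atTop hS hlim) (B * r) ?_, ?_⟩
  · filter_upwards [hlim, hSle] with ω hω hωle
    exact le_of_tendsto' hω.norm hωle
  · refine tendsto_nhds_unique (tendsto_integral_of_dominated_convergence (fun _ => B * r) hS
      (integrable_const _) (fun k => hSle.mono fun _ h => h k) hlim) ?_
    simp_rw [integral_stoppedProd hf hind hbound hmean hB hr]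
    exact tendsto_const_nhds

lemma ae_tendsto_prod_zero (hind : iIndepFun f P) (hident : ∀ i, IdentDistrib (f i) (f 0) P P)
    (ha : 0 < a) (hbound : ∀ᵐ ω ∂P, f 0 ω ∈ Set.Icc a B) (hmean : ∫ ω, f 0 ω ∂P = 1)
    (hne : ¬ f 0 =ᵐ[P] 1) :
    ∀ᵐ ω ∂P, Tendsto (fun k => ∏ i ∈ range k, f i ω) atTop (𝓝 0) := by
  have hpos : ∀ᵐ ω ∂P, ∀ i, 0 < f i ω := ae_all_iff.2 fun i =>
    ((hident i).symm.ae_mem_snd measurableSet_Icc hbound).mono fun _ h => ha.trans_le h.1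
  have hf0 : AEStronglyMeasurable (f 0) P := (hident 0).aemeasurable_fst.aestronglyMeasurable
  have hint : Integrable (f 0) P := .of_bound hf0 B
    (hbound.mono fun _ h => by rw [Real.norm_of_nonneg (ha.trans_le h.1).le]; exact h.2)
  have hlog : Integrable (fun ω => Real.log (f 0 ω)) P :=
    .of_bound (Real.measurable_log.comp_aemeasurable hf0.aemeasurable).aestronglyMeasurable
      (|Real.log a| + |Real.log B|) <| hbound.mono fun _ h => by
      have hlo := Real.log_le_log ha h.1
      have hhi := Real.log_le_log (ha.trans_le h.1) h.2
      rw [Real.norm_eq_abs, abs_le]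
      constructor <;> linarith [neg_abs_le (Real.log a), le_abs_self (Real.log B),
        abs_nonneg (Real.log a), abs_nonneg (Real.log B)]
  exact ae_tendsto_prod_zero_of_integral_log_neg hind hident hpos hlog
    (integral_log_neg (hpos.mono fun _ h => h 0) hint hlog hmean hne)

lemma measureReal_exists_prod_ge_bounds_of_measurable (hf : ∀ i, Measurable (f i))
    (hind : iIndepFun f P) (hident : ∀ i, IdentDistrib (f i) (f 0) P P) (ha : 0 < a)
    (hbound : ∀ᵐ ω ∂P, f 0 ω ∈ Set.Icc a B) (hmean : ∫ ω, f 0 ω ∂P = 1)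
    (hne : ¬ f 0 =ᵐ[P] 1) (hr : 1 < r) :
    P.real {ω | ∃ k, r ≤ ∏ i ∈ range k, f i ω} * r ≤ 1 ∧
      1 < P.real {ω | ∃ k, r ≤ ∏ i ∈ range k, f i ω} * (B * r) := by
  have hall : ∀ᵐ ω ∂P, ∀ i, f i ω ∈ Set.Icc 0 B := ae_all_iff.2 fun i =>
    ((hident i).symm.ae_mem_snd measurableSet_Icc hbound).mono fun _ h => ⟨ha.le.trans h.1, h.2⟩
  have hB : 1 ≤ B := by
    simpa [hmean] using norm_integral_le_of_norm_le_const (μ := P) (f := f 0)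
      (hall.mono fun _ h => by rw [Real.norm_of_nonneg (h 0).1]; exact (h 0).2)
  obtain ⟨hL, hL1⟩ := integral_prodAtFirstHit (r := r) hf hind hall
    (fun i => (hident i).integral_eq.trans hmean) hB hr.le
    (ae_tendsto_prod_zero hind hident ha hbound hmean hne)
  refine measureReal_bounds_of_integral_eq_one ?_ hL hL1
    (hall.mono fun _ h hA => prodAtFirstHit_mem_Ico r h (by linarith) hr hA) fun _ h => dif_neg h
  simp_rw [Set.ofPred_exists]
  exact .iUnion fun _ => measurableSet_le measurable_const (measurable_prod _ fun i _ => hf i)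

theorem measureReal_exists_prod_ge_bounds (hind : iIndepFun f P)
    (hident : ∀ i, IdentDistrib (f i) (f 0) P P) (ha : 0 < a)
    (hbound : ∀ᵐ ω ∂P, f 0 ω ∈ Set.Icc a B) (hmean : ∫ ω, f 0 ω ∂P = 1)
    (hne : ¬ f 0 =ᵐ[P] 1) (hr : 1 < r) :
    P.real {ω | ∃ k, r ≤ ∏ i ∈ range k, f i ω} * r ≤ 1 ∧
      1 < P.real {ω | ∃ k, r ≤ ∏ i ∈ range k, f i ω} * (B * r) := by
  have hm i := (hident i).aemeasurable_fst
  have hfg i : f i =ᵐ[P] (hm i).mk (f i) := (hm i).ae_eq_mk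
  have hA : {ω | ∃ k, r ≤ ∏ i ∈ range k, f i ω} =ᵐ[P]
      {ω | ∃ k, r ≤ ∏ i ∈ range k, (hm i).mk (f i) ω} := by
    refine eventuallyEq_set.2 ?_
    filter_upwards [ae_all_iff.2 hfg] with ω hω
    simp only [hω]
  rw [measureReal_congr hA]
  exact measureReal_exists_prod_ge_bounds_of_measurable (fun i => (hm i).measurable_mk)
    (hind.congr hfg)
    (fun i => ((hm i).identDistrib_mk.symm.trans (hident i)).trans (hm 0).identDistrib_mk) ha
    (by filter_upwards [hbound, hfg 0] with ω h h'; rwa [← h'])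
    (by rwa [← integral_congr_ae (hfg 0)]) (fun h => hne ((hfg 0).trans h)) hr

end Probability

section BettingFactor

noncomputable def bettingFactor (μ c t : ℝ) : ℝ := (1 - c) + c * (1 - t) / (1 - μ)

variable {μ c : ℝ}

lemma measurable_bettingFactor : Measurable (bettingFactor μ c) := by
  unfold bettingFactor
  fun_prop

lemma bettingFactor_mem_Icc (hμ : μ < 1) (hc : 0 ≤ c) {t : ℝ} (ht : t ∈ Set.Icc 0 1) :
    bettingFactor μ c t ∈ Set.Icc (1 - c) ((1 - c) + c / (1 - μ)) := by
  have h1μ : 0 < 1 - μ := by linarith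
  constructor
  · have : 0 ≤ c * (1 - t) / (1 - μ) := div_nonneg (mul_nonneg hc (by linarith [ht.2])) h1μ.le
    simp only [bettingFactor]
    linarith
  · simp only [bettingFactor, add_le_add_iff_left]
    gcongr
    exact mul_le_of_le_one_right hc (by linarith [ht.1])

lemma bettingFactor_eq_one_iff (hμ : μ ≠ 1) (hc : c ≠ 0) {t : ℝ} :
    bettingFactor μ c t = 1 ↔ t = μ := by
  have h1μ : 1 - μ ≠ 0 := sub_ne_zero.2 hμ.symm
  have : bettingFactor μ c t - 1 = c * (μ - t) / (1 - μ) := by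
    simp only [bettingFactor]
    field_simp
    ring
  rw [← sub_eq_zero, this, div_eq_zero_iff, mul_eq_zero, sub_eq_zero]
  simp [hc, h1μ, eq_comm]

lemma integral_bettingFactor {Ω : Type*} {mΩ : MeasurableSpace Ω} {P : Measure Ω}
    [IsProbabilityMeasure P] {X : Ω → ℝ} (hX : Integrable X P) :
    ∫ ω, bettingFactor μ c (X ω) ∂P = bettingFactor μ c (∫ ω, X ω ∂P) := by
  have h : Integrable (fun ω => c * (1 - X ω) / (1 - μ)) P :=
    (((integrable_const 1).sub hX).const_mul c).div_const _
  simp only [bettingFactor]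
  rw [integral_add (integrable_const _) h, integral_div, integral_const_mul,
    integral_sub (integrable_const 1) hX]
  simp

lemma one_sub_mul_add_div_lt_one (hμ0 : 0 < μ) (hμ1 : μ < 1) (hc : c < 1) :
    (1 - μ) * ((1 - c) + c / (1 - μ)) < 1 := by
  have h : (1 - μ) * ((1 - c) + c / (1 - μ)) = 1 - μ * (1 - c) := by
    field_simp [(sub_pos.2 hμ1).ne']
    ring
  linarith [mul_pos hμ0 (sub_pos.2 hc)]

end BettingFactor

theorem type_one_error_bounds_general
    {Ω : Type*} {mΩ : MeasurableSpace Ω} (P : Measure Ω) [IsProbabilityMeasure P]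
    (μ : ℝ) (hμ : μ ∈ Set.Ioo (0 : ℝ) 1)
    (T₀ : Ω → ℝ) (hT₀range : ∀ᵐ ω ∂P, T₀ ω ∈ Set.Icc (0 : ℝ) 1)
    (hET₀ : ∫ ω, T₀ ω ∂P = μ) (hT₀μ : P {ω | T₀ ω = μ} < 1)
    (c : ℝ) (hc : c ∈ Set.Ioo (0 : ℝ) 1)
    (α : ℝ) (hα : α ∈ Set.Ioo (0 : ℝ) 1)
    (T : ℕ → Ω → ℝ)
    (hindep : iIndepFun T P)
    (hident : ∀ i, IdentDistrib (T i) T₀ P P) :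
    (P {ω | ∃ k : ℕ,
        1 / α ≤ ∏ i ∈ Finset.range k, ((1 - c) + c * (1 - T i ω) / (1 - μ))}).toReal ≤ α ∧
    α / ((1 - c) + c / (1 - μ)) <
      (P {ω | ∃ k : ℕ,
        1 / α ≤ ∏ i ∈ Finset.range k, ((1 - c) + c * (1 - T i ω) / (1 - μ))}).toReal ∧
    α * (1 - μ) < α / ((1 - c) + c / (1 - μ)) := by
  obtain ⟨hμ0, hμ1⟩ := hμ
  obtain ⟨hc0, hc1⟩ := hc
  obtain ⟨hα0, hα1⟩ := hα
  have hT : ∀ᵐ ω ∂P, T 0 ω ∈ Set.Icc (0 : ℝ) 1 :=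
    (hident 0).symm.ae_mem_snd measurableSet_Icc hT₀range
  have hTint : Integrable (T 0) P := .of_bound (hident 0).aemeasurable_fst.aestronglyMeasurable 1
    (hT.mono fun _ h => abs_le.2 ⟨by linarith [h.1], h.2⟩)
  obtain ⟨hle, hlt⟩ := measureReal_exists_prod_ge_bounds
    (f := fun i ω => bettingFactor μ c (T i ω)) (r := 1 / α)
    (hindep.comp _ fun _ => measurable_bettingFactor)
    (fun i => ((hident i).trans (hident 0).symm).comp measurable_bettingFactor)
    (sub_pos.2 hc1) (hT.mono fun _ h => bettingFactor_mem_Icc hμ1 hc0.le h)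
    (by rw [integral_bettingFactor hTint, (hident 0).integral_eq, hET₀,
      bettingFactor_eq_one_iff hμ1.ne hc0.ne'])
    (fun h => (hident 0).not_ae_eq_const hT₀μ
      (h.mono fun _ hω => (bettingFactor_eq_one_iff hμ1.ne hc0.ne').1 hω))
    (one_lt_one_div hα0 hα1)
  simp only [measureReal_def, bettingFactor] at hle hlt
  have hB0 : 0 < (1 - c) + c / (1 - μ) := by linarith [div_pos hc0 (sub_pos.2 hμ1)]
  refine ⟨?_, ?_, ?_⟩
  · rwa [mul_one_div, div_le_one hα0] at hle
  · rwa [← mul_assoc, mul_one_div, one_lt_div hα0, ← div_lt_iff₀ hB0] at hlt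
  · rw [lt_div_iff₀ hB0, mul_assoc]
    exact mul_lt_of_lt_one_right hα0 (one_sub_mul_add_div_lt_one hμ0 hμ1 hc1)

/-- Bounds on the probability of Type I error.  Let `T₀` take values in `[0,1]` a.s. with
`E[T₀] = μ ∈ (0,1)` and `P(T₀ = μ) < 1`, let `0 < c < 1`, `0 < α < 1`, let `T 0, T 1, …` be
an i.i.d. sample of `T₀`, and let `M k = ∏_{i<k} ((1−c) + c·(1−T i)/(1−μ))`.  Then the
probability of Type I error `P(∃ k, M k ≥ 1/α)` is at most `α` but greater than
`α/((1−c) + c/(1−μ))`, and `α/((1−c) + c/(1−μ)) > α·(1−μ)`. -/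
theorem type_one_error_bounds
    {Ω : Type*} {mΩ : MeasurableSpace Ω} (P : Measure Ω) [IsProbabilityMeasure P]
    (μ : ℝ) (hμ : μ ∈ Set.Ioo (0 : ℝ) 1)
    (T₀ : Ω → ℝ) (hT₀meas : Measurable T₀) (hT₀range : ∀ᵐ ω ∂P, T₀ ω ∈ Set.Icc (0 : ℝ) 1)
    (hET₀ : ∫ ω, T₀ ω ∂P = μ) (hT₀μ : P {ω | T₀ ω = μ} < 1)
    (c : ℝ) (hc : c ∈ Set.Ioo (0 : ℝ) 1)
    (α : ℝ) (hα : α ∈ Set.Ioo (0 : ℝ) 1)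
    (T : ℕ → Ω → ℝ)
    (hindep : iIndepFun T P)
    (hident : ∀ i, IdentDistrib (T i) T₀ P P) :
    (P {ω | ∃ k : ℕ,
        1 / α ≤ ∏ i ∈ Finset.range k, ((1 - c) + c * (1 - T i ω) / (1 - μ))}).toReal ≤ α ∧
    α / ((1 - c) + c / (1 - μ)) <
      (P {ω | ∃ k : ℕ,
        1 / α ≤ ∏ i ∈ Finset.range k, ((1 - c) + c * (1 - T i ω) / (1 - μ))}).toReal ∧
    α * (1 - μ) < α / ((1 - c) + c / (1 - μ)) :=
  type_one_error_bounds_general (mΩ := mΩ) P μ hμ T₀ hT₀range hET₀ hT₀μ c hc α hα T hindep hident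
end

section
/- Let T be a random variable with 0 ≤ T ≤ 1 almost surely, let 0 < μ < 1, 0 < c < 1, set θ = (1−c)·μ, let T_1, T_2, … be an i.i.d. sample of T, and let M_k(c) = ∏_{i=1}^k ((1−c) + c·(1−T_i)/(1−μ)) with M_0(c) = 1. Then: (i) if E[T] ≤ θ, then E[((1−c) + c·(1−T)/(1−μ))^{−1}] ≤ 1, so that {M_k(c)^{−1}}_{k≥0} is a nonnegative supermartingale with respect to the natural filtration of (T_i), and moreover M_k(c) → +∞ almost surely as k → ∞; (ii) if E[T] ≥ μ and P(T = μ) < 1, then M_k(c)^{−1} → +∞ almost surely as k → ∞. -/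
/-!
The factor `f t = (1 - c) + c * (1 - t) / (1 - μ)` is affine in `t`, with `f 0 = (1 - θ) / (1 - μ)`,
`f 1 = 1 - c = θ / μ` and `f μ = 1`. On `[0, 1]`, `1 / f` is convex and `log ∘ f` concave, so each
lies on the appropriate side of its chord. Averaging, `E[T] ≤ θ` gives
`E[1 / f(T)] ≤ (1 - θ) / f 0 + θ / f 1 = 1` and
`E[log f(T)] ≥ (1 - θ) log (f 0) + θ log (f 1) = KL(Ber θ ‖ Ber μ) > 0`.
If instead `E[T] ≥ μ`, then `E[f(T)] = f(E[T]) ≤ 1`, and `log x ≤ x - 1`, strict unless `x = 1`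
(that is, `T = μ`), gives `E[log f(T)] < 0`. Independence turns `E[1 / f(T)] ≤ 1` into the
supermartingale property of `∏ 1 / f(Tᵢ)`, and the strong law of large numbers applied to
`log M_k = ∑ log f(Tᵢ)` gives the divergences.
-/

open MeasureTheory ProbabilityTheory Filter Real Set

section Integrals

variable {Ω : Type*} {mΩ : MeasurableSpace Ω} {P : Measure Ω} [IsProbabilityMeasure P]
  {X : Ω → ℝ}

lemma integral_const_add_mul (a b : ℝ) (hX : Integrable X P) :
    ∫ ω, (a + b * X ω) ∂P = a + b * ∫ ω, X ω ∂P := by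
  rw [integral_add (integrable_const a) (hX.const_mul b), integral_const, integral_const_mul]
  simp

lemma integrable_comp_of_continuousOn_Icc {a b : ℝ} {φ : ℝ → ℝ} (hφ : Measurable φ)
    (hφc : ContinuousOn φ (Icc a b)) (hX : AEMeasurable X P) (hXab : ∀ᵐ ω ∂P, X ω ∈ Icc a b) :
    Integrable (fun ω => φ (X ω)) P := by
  obtain ⟨C, hC⟩ := isCompact_Icc.exists_bound_of_continuousOn hφc
  refine (integrable_const C).mono' (hφ.comp_aemeasurable hX).aestronglyMeasurable ?_
  filter_upwards [hXab] with ω hω using hC _ hω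

lemma ConvexOn.integral_comp_le_of_mem_Icc {φ : ℝ → ℝ} (hφ : ConvexOn ℝ (Icc 0 1) φ)
    (hX : Integrable X P) (hX01 : ∀ᵐ ω ∂P, X ω ∈ Icc 0 1)
    (hφX : Integrable (fun ω => φ (X ω)) P) :
    ∫ ω, φ (X ω) ∂P ≤ (1 - ∫ ω, X ω ∂P) * φ 0 + (∫ ω, X ω ∂P) * φ 1 := by
  have hchord : ∀ t ∈ Icc (0 : ℝ) 1, φ t ≤ φ 0 + (φ 1 - φ 0) * t := by
    intro t ⟨ht0, ht1⟩
    have := hφ.2 (left_mem_Icc.2 zero_le_one) (right_mem_Icc.2 zero_le_one)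
      (sub_nonneg.2 ht1) ht0 (sub_add_cancel 1 t)
    simp only [smul_eq_mul, mul_zero, mul_one, zero_add] at this
    linarith
  calc ∫ ω, φ (X ω) ∂P ≤ ∫ ω, (φ 0 + (φ 1 - φ 0) * X ω) ∂P :=
        integral_mono_ae hφX ((integrable_const _).add (hX.const_mul _))
          (by filter_upwards [hX01] with ω hω using hchord _ hω)
    _ = _ := by rw [integral_const_add_mul _ _ hX]; ring

lemma integral_log_neg_of_integral_le_one (hX : Integrable X P)
    (hlogX : Integrable (fun ω => log (X ω)) P) (hpos : ∀ᵐ ω ∂P, 0 < X ω)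
    (hmean : ∫ ω, X ω ∂P ≤ 1) (hne : ¬ ∀ᵐ ω ∂P, X ω = 1) :
    ∫ ω, log (X ω) ∂P < 0 := by
  set gap : Ω → ℝ := fun ω => X ω - 1 - log (X ω) with hgap
  have hgap_int : Integrable gap P := (hX.sub (integrable_const 1)).sub hlogX
  have hgap_nonneg : 0 ≤ᵐ[P] gap := by
    filter_upwards [hpos] with ω hω
    simp only [hgap, Pi.zero_apply]
    linarith [log_le_sub_one_of_pos hω]
  have hgap_pos : 0 < ∫ ω, gap ω ∂P := by
    refine (integral_nonneg_of_ae hgap_nonneg).lt_of_ne fun h => hne ?_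
    filter_upwards [(integral_eq_zero_iff_of_nonneg_ae hgap_nonneg hgap_int).1 h.symm, hpos]
      with ω hzero hω
    by_contra hX1
    have := log_lt_sub_one_of_pos hω hX1
    simp only [hgap, Pi.zero_apply] at hzero
    linarith
  have : ∫ ω, gap ω ∂P = ∫ ω, X ω ∂P - 1 - ∫ ω, log (X ω) ∂P := by
    rw [integral_sub (f := fun ω => X ω - 1) (hX.sub (integrable_const 1)) hlogX,
      integral_sub hX (integrable_const 1)]
    simp
  linarith

end Integrals

open InformationTheory in
lemma bernoulli_kl_pos {θ μ : ℝ} (hθ : θ ∈ Icc 0 1) (hμ : μ ∈ Ioo 0 1) (hθμ : θ ≠ μ) :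
    0 < (1 - θ) * log ((1 - θ) / (1 - μ)) + θ * log (θ / μ) := by
  have hμ0 : μ ≠ 0 := hμ.1.ne'
  have hμ1 : 1 - μ ≠ 0 := by linarith [hμ.2]
  have hsplit : (1 - θ) * log ((1 - θ) / (1 - μ)) + θ * log (θ / μ)
      = (1 - μ) * klFun ((1 - θ) / (1 - μ)) + μ * klFun (θ / μ) := by
    simp only [klFun]
    field_simp
    ring
  have hθ' : 0 < klFun (θ / μ) := by
    refine (klFun_nonneg (div_nonneg hθ.1 hμ.1.le)).lt_of_ne' fun h => hθμ ?_
    rw [klFun_eq_zero_iff (div_nonneg hθ.1 hμ.1.le), div_eq_one_iff_eq hμ0] at h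
    exact h
  have := klFun_nonneg (div_nonneg (sub_nonneg.2 hθ.2) (sub_pos.2 hμ.2).le)
  rw [hsplit]
  nlinarith [hμ.1, hμ.2]

noncomputable def testFactor (μ c t : ℝ) : ℝ := (1 - c) + c * (1 - t) / (1 - μ)

section TestFactor

variable {μ c : ℝ}

lemma testFactor_eq_lineMap (μ c : ℝ) :
    testFactor μ c = AffineMap.lineMap (testFactor μ c 0) (testFactor μ c 1) := by
  ext t
  simp only [AffineMap.lineMap_apply_module', smul_eq_mul, testFactor]
  ring

@[fun_prop]
lemma continuous_testFactor (μ c : ℝ) : Continuous (testFactor μ c) := by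
  unfold testFactor; fun_prop

@[fun_prop]
lemma measurable_testFactor (μ c : ℝ) : Measurable (testFactor μ c) :=
  (continuous_testFactor μ c).measurable

lemma testFactor_zero (hμ : μ ≠ 1) : testFactor μ c 0 = (1 - (1 - c) * μ) / (1 - μ) := by
  have : 1 - μ ≠ 0 := sub_ne_zero.2 hμ.symm
  unfold testFactor
  field_simp
  ring

lemma testFactor_one (μ c : ℝ) : testFactor μ c 1 = 1 - c := by
  simp [testFactor]

lemma testFactor_sub_one (hμ : μ ≠ 1) (t : ℝ) : testFactor μ c t - 1 = c * (μ - t) / (1 - μ) := by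
  have : 1 - μ ≠ 0 := sub_ne_zero.2 hμ.symm
  unfold testFactor
  field_simp
  ring

lemma testFactor_antitone (hc : 0 ≤ c) (hμ : μ < 1) : Antitone (testFactor μ c) := by
  intro s t hst
  have : 0 < 1 - μ := sub_pos.2 hμ
  unfold testFactor
  gcongr

lemma testFactor_pos (hc : c ∈ Ico 0 1) (hμ : μ < 1) {t : ℝ} (ht : t ≤ 1) :
    0 < testFactor μ c t :=
  (sub_pos.2 hc.2).trans_le (testFactor_one μ c ▸ testFactor_antitone hc.1 hμ ht)

lemma testFactor_eq_one_iff (hc : c ≠ 0) (hμ : μ ≠ 1) {t : ℝ} : testFactor μ c t = 1 ↔ t = μ := by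
  rw [← sub_eq_zero, testFactor_sub_one hμ, div_eq_zero_iff, mul_eq_zero, sub_eq_zero,
    sub_eq_zero]
  tauto

lemma ConvexOn.comp_testFactor {φ : ℝ → ℝ} (hφ : ConvexOn ℝ (Ioi 0) φ) (hc : c ∈ Ico 0 1)
    (hμ : μ < 1) : ConvexOn ℝ (Icc 0 1) fun t => φ (testFactor μ c t) := by
  have h := hφ.comp_affineMap (AffineMap.lineMap (testFactor μ c 0) (testFactor μ c 1))
  rw [← testFactor_eq_lineMap] at h
  exact h.subset (fun t ht => testFactor_pos hc hμ ht.2) (convex_Icc 0 1)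

end TestFactor

section Drift

variable {Ω : Type*} {mΩ : MeasurableSpace Ω} {P : Measure Ω} [IsProbabilityMeasure P]
  {X : Ω → ℝ} {μ c : ℝ}

lemma integral_testFactor (hX : Integrable X P) :
    ∫ ω, testFactor μ c (X ω) ∂P = testFactor μ c (∫ ω, X ω ∂P) := by
  have haffine : ∀ t, testFactor μ c t = (1 - c + c / (1 - μ)) + (-(c / (1 - μ))) * t := by
    intro t; unfold testFactor; ring
  simp only [haffine]
  exact integral_const_add_mul _ _ hX

lemma integrable_comp_testFactor {φ : ℝ → ℝ} (hφ : Measurable φ)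
    (hφc : ContinuousOn φ (Ioi 0)) (hc : c ∈ Ico 0 1) (hμ : μ < 1) (hX : AEMeasurable X P)
    (hX01 : ∀ᵐ ω ∂P, X ω ∈ Icc 0 1) : Integrable (fun ω => φ (testFactor μ c (X ω))) P :=
  integrable_comp_of_continuousOn_Icc (φ := fun t => φ (testFactor μ c t))
    (hφ.comp (measurable_testFactor μ c))
    (hφc.comp (continuous_testFactor μ c).continuousOn fun _ ht => testFactor_pos hc hμ ht.2)
    hX hX01

lemma integrable_inv_testFactor (hc : c ∈ Ico 0 1) (hμ : μ < 1) (hX : AEMeasurable X P)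
    (hX01 : ∀ᵐ ω ∂P, X ω ∈ Icc 0 1) : Integrable (fun ω => (testFactor μ c (X ω))⁻¹) P :=
  integrable_comp_testFactor measurable_inv (continuousOn_inv₀.mono fun _ hx => ne_of_gt hx)
    hc hμ hX hX01

lemma integrable_log_testFactor (hc : c ∈ Ico 0 1) (hμ : μ < 1) (hX : AEMeasurable X P)
    (hX01 : ∀ᵐ ω ∂P, X ω ∈ Icc 0 1) : Integrable (fun ω => log (testFactor μ c (X ω))) P :=
  integrable_comp_testFactor measurable_log (continuousOn_log.mono fun _ hx => ne_of_gt hx)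
    hc hμ hX hX01

lemma integral_inv_testFactor_le_one (hc : c ∈ Ico 0 1) (hμ : μ < 1) (hX : Integrable X P)
    (hX01 : ∀ᵐ ω ∂P, X ω ∈ Icc 0 1) (hmean : ∫ ω, X ω ∂P ≤ (1 - c) * μ) :
    ∫ ω, (testFactor μ c (X ω))⁻¹ ∂P ≤ 1 := by
  have hθ : 0 < 1 - (1 - c) * μ := by nlinarith [hc.1, hc.2]
  have hf1 : 0 < testFactor μ c 1 := testFactor_pos hc hμ le_rfl
  have hinv : ConvexOn ℝ (Ioi 0) fun x : ℝ => x⁻¹ := by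
    simpa using convexOn_zpow (𝕜 := ℝ) (-1)
  have hchord := (hinv.comp_testFactor hc hμ).integral_comp_le_of_mem_Icc hX hX01
    (integrable_inv_testFactor hc hμ hX.aemeasurable hX01)
  have hanti : (testFactor μ c 0)⁻¹ ≤ (testFactor μ c 1)⁻¹ :=
    inv_anti₀ hf1 (testFactor_antitone hc.1 hμ zero_le_one)
  calc ∫ ω, (testFactor μ c (X ω))⁻¹ ∂P
      ≤ (1 - ∫ ω, X ω ∂P) * (testFactor μ c 0)⁻¹ + (∫ ω, X ω ∂P) * (testFactor μ c 1)⁻¹ := hchord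
    _ ≤ (1 - (1 - c) * μ) * (testFactor μ c 0)⁻¹ + (1 - c) * μ * (testFactor μ c 1)⁻¹ := by
      nlinarith
    _ = 1 := by
      rw [testFactor_zero hμ.ne, testFactor_one]
      have : 1 - μ ≠ 0 := sub_ne_zero.2 hμ.ne'
      have : 1 - c ≠ 0 := sub_ne_zero.2 hc.2.ne'
      field_simp
      ring

lemma integral_log_testFactor_pos (hc : c ∈ Ioo 0 1) (hμ : μ ∈ Ioo 0 1) (hX : Integrable X P)
    (hX01 : ∀ᵐ ω ∂P, X ω ∈ Icc 0 1) (hmean : ∫ ω, X ω ∂P ≤ (1 - c) * μ) :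
    0 < ∫ ω, log (testFactor μ c (X ω)) ∂P := by
  have hc' : c ∈ Ico 0 1 := Ioo_subset_Ico_self hc
  have hf1 : 0 < testFactor μ c 1 := testFactor_pos hc' hμ.2 le_rfl
  have hchord := (strictConcaveOn_log_Ioi.concaveOn.neg.comp_testFactor hc' hμ.2)
    |>.integral_comp_le_of_mem_Icc hX hX01
      (integrable_log_testFactor hc' hμ.2 hX.aemeasurable hX01).fun_neg
  simp only [Pi.neg_apply, integral_neg] at hchord
  have hanti : log (testFactor μ c 1) ≤ log (testFactor μ c 0) :=
    log_le_log hf1 (testFactor_antitone hc.1.le hμ.2 zero_le_one)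
  have hkl := bernoulli_kl_pos (θ := (1 - c) * μ)
    ⟨by nlinarith [hc.2, hμ.1], by nlinarith [mul_pos hc.1 hμ.1, hμ.2]⟩ hμ
    (by nlinarith [mul_pos hc.1 hμ.1])
  rw [mul_div_cancel_right₀ _ hμ.1.ne', ← testFactor_zero hμ.2.ne] at hkl
  rw [testFactor_one] at hchord hanti
  nlinarith [mul_nonneg (sub_nonneg.2 hmean) (sub_nonneg.2 hanti)]

lemma integral_log_testFactor_neg (hc : c ∈ Ioo 0 1) (hμ : μ < 1) (hX : Integrable X P)
    (hX01 : ∀ᵐ ω ∂P, X ω ∈ Icc 0 1) (hmean : μ ≤ ∫ ω, X ω ∂P) (hX_ne : P {ω | X ω = μ} < 1) :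
    ∫ ω, log (testFactor μ c (X ω)) ∂P < 0 := by
  have hc' : c ∈ Ico 0 1 := Ioo_subset_Ico_self hc
  have hpos : ∀ᵐ ω ∂P, 0 < testFactor μ c (X ω) := by
    filter_upwards [hX01] with ω hω using testFactor_pos hc' hμ hω.2
  refine integral_log_neg_of_integral_le_one
    (integrable_comp_testFactor measurable_id continuousOn_id hc' hμ hX.aemeasurable hX01)
    (integrable_log_testFactor hc' hμ hX.aemeasurable hX01) hpos ?_ fun h => hX_ne.ne ?_
  · rw [integral_testFactor hX, ← (testFactor_eq_one_iff hc.1.ne' hμ.ne).2 rfl]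
    exact testFactor_antitone hc.1.le hμ hmean
  · have hXμ : ∀ᵐ ω ∂P, X ω = μ := by
      filter_upwards [h] with ω hω using (testFactor_eq_one_iff hc.1.ne' hμ.ne).1 hω
    rw [measure_congr (eventuallyEq_univ.2 hXμ), measure_univ]

end Drift

section NaturalFiltration

variable {Ω β : Type*} {mΩ : MeasurableSpace Ω} [MeasurableSpace β] {P : Measure Ω}
  {T : ℕ → Ω → β} {ℱ : Filtration ℕ mΩ}

lemma comap_le_of_natural
    (hℱ : ∀ k, ℱ k = ⨆ i ∈ Finset.range k, MeasurableSpace.comap (T i) inferInstance)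
    {i k : ℕ} (hik : i < k) : MeasurableSpace.comap (T i) inferInstance ≤ ℱ k := by
  rw [hℱ k]
  exact le_iSup₂ (f := fun j (_ : j ∈ Finset.range k) => MeasurableSpace.comap (T j) _) i
    (Finset.mem_range.2 hik)

lemma measurable_of_natural
    (hℱ : ∀ k, ℱ k = ⨆ i ∈ Finset.range k, MeasurableSpace.comap (T i) inferInstance) (i : ℕ) :
    Measurable (T i) :=
  measurable_iff_comap_le.2 ((comap_le_of_natural hℱ i.lt_succ_self).trans (ℱ.le _))

lemma indep_comap_of_natural
    (hℱ : ∀ k, ℱ k = ⨆ i ∈ Finset.range k, MeasurableSpace.comap (T i) inferInstance)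
    (hindep : iIndepFun T P) (k : ℕ) :
    Indep (MeasurableSpace.comap (T k) inferInstance) (ℱ k) P := by
  have h := indep_iSup_of_disjoint
    (fun i => measurable_iff_comap_le.1 (measurable_of_natural hℱ i)) hindep.iIndep
    (S := {k}) (T := (Finset.range k : Set ℕ)) (by simp)
  simpa [hℱ k] using h

lemma supermartingale_prod_of_natural [IsProbabilityMeasure P]
    (hℱ : ∀ k, ℱ k = ⨆ i ∈ Finset.range k, MeasurableSpace.comap (T i) inferInstance)
    (hindep : iIndepFun T P) {g : β → ℝ} (hg : Measurable g)
    (hnonneg : ∀ i, ∀ᵐ ω ∂P, 0 ≤ g (T i ω)) (hint : ∀ i, Integrable (fun ω => g (T i ω)) P)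
    (hmean : ∀ i, ∫ ω, g (T i ω) ∂P ≤ 1) :
    Supermartingale (fun k ω => ∏ i ∈ Finset.range k, g (T i ω)) ℱ P := by
  have hadapted : StronglyAdapted ℱ fun k ω => ∏ i ∈ Finset.range k, g (T i ω) := fun k =>
    (Finset.measurable_prod _ fun i hi => hg.comp (measurable_iff_comap_le.2
      (comap_le_of_natural hℱ (Finset.mem_range.1 hi)))).stronglyMeasurable
  have hprod_int : ∀ k, Integrable (fun ω => ∏ i ∈ Finset.range k, g (T i ω)) P := by
    intro k
    induction k with
    | zero => simp
    | succ k ih =>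
      have hind := (hindep.comp (fun _ => g) fun _ => hg).indepFun_finsetProd_of_notMem
        (fun i => hg.comp (measurable_of_natural hℱ i)) (Finset.notMem_range_self (n := k))
      rw [Finset.prod_fn] at hind
      simp only [Finset.prod_range_succ]
      exact hind.integrable_mul ih (hint k)
  refine supermartingale_nat hadapted hprod_int fun k => ?_
  have hpull := condExp_mul_of_stronglyMeasurable_left (m := ℱ k) (hadapted k)
    (by have h := hprod_int (k + 1); simp only [Finset.prod_range_succ] at h; exact h) (hint k)
  have hindep_k := condExp_indep_eq (μ := P) (f := fun ω => g (T k ω))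
    (measurable_iff_comap_le.1 (measurable_of_natural hℱ k)) (ℱ.le k)
    (hg.comp (comap_measurable (T k))).stronglyMeasurable (indep_comap_of_natural hℱ hindep k)
  simp only [Finset.prod_range_succ]
  filter_upwards [hpull, hindep_k, ae_all_iff.2 hnonneg] with ω hpull_ω hindep_ω hnonneg_ω
  refine hpull_ω.le.trans ?_
  rw [Pi.mul_apply, hindep_ω]
  exact mul_le_of_le_one_right (Finset.prod_nonneg fun i _ => hnonneg_ω i) (hmean k)

end NaturalFiltration

section StrongLaw

variable {Ω β : Type*} {mΩ : MeasurableSpace Ω} [MeasurableSpace β] {P : Measure Ω}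
  {T : ℕ → Ω → β} {T₀ : Ω → β}

lemma ae_tendsto_sum_atTop_of_integral_pos (X : ℕ → Ω → ℝ) (hint : Integrable (X 0) P)
    (hindep : Pairwise fun i j => IndepFun (X i) (X j) P)
    (hident : ∀ i, IdentDistrib (X i) (X 0) P P) (hpos : 0 < ∫ ω, X 0 ω ∂P) :
    ∀ᵐ ω ∂P, Tendsto (fun n => ∑ i ∈ Finset.range n, X i ω) atTop atTop := by
  filter_upwards [strong_law_ae_real X hint hindep hident] with ω hω
  refine (Tendsto.atTop_mul_pos hpos tendsto_natCast_atTop_atTop hω).congr' ?_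
  filter_upwards [eventually_ne_atTop 0] with n hn
  field_simp

lemma ae_tendsto_prod_atTop_of_integral_log_pos
    (hindep : Pairwise fun i j => IndepFun (T i) (T j) P) (hident : ∀ i, IdentDistrib (T i) T₀ P P)
    {g : β → ℝ} (hg : Measurable g) (hpos : ∀ᵐ ω ∂P, 0 < g (T₀ ω))
    (hint : Integrable (fun ω => log (g (T₀ ω))) P) (hlog : 0 < ∫ ω, log (g (T₀ ω)) ∂P) :
    ∀ᵐ ω ∂P, Tendsto (fun k => ∏ i ∈ Finset.range k, g (T i ω)) atTop atTop := by
  have hlogT : ∀ i, IdentDistrib (fun ω => log (g (T i ω))) (fun ω => log (g (T₀ ω))) P P :=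
    fun i => (hident i).comp (measurable_log.comp hg)
  have hsum := ae_tendsto_sum_atTop_of_integral_pos (fun i ω => log (g (T i ω)))
    ((hlogT 0).integrable_iff.2 hint) (fun i j hij => (hindep hij).comp (measurable_log.comp hg)
      (measurable_log.comp hg)) (fun i => (hlogT i).trans (hlogT 0).symm)
    ((hlogT 0).integral_eq ▸ hlog)
  have hposT : ∀ᵐ ω ∂P, ∀ i, 0 < g (T i ω) := ae_all_iff.2 fun i =>
    (hident i).symm.ae_snd (measurableSet_lt measurable_const hg) hpos
  filter_upwards [hsum, hposT] with ω hsum_ω hpos_ω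
  refine (tendsto_exp_atTop.comp hsum_ω).congr fun k => ?_
  simp only [Function.comp_apply, exp_sum, exp_log (hpos_ω _)]

lemma ae_tendsto_inv_prod_atTop_of_integral_log_neg
    (hindep : Pairwise fun i j => IndepFun (T i) (T j) P) (hident : ∀ i, IdentDistrib (T i) T₀ P P)
    {g : β → ℝ} (hg : Measurable g) (hpos : ∀ᵐ ω ∂P, 0 < g (T₀ ω))
    (hint : Integrable (fun ω => log (g (T₀ ω))) P) (hlog : ∫ ω, log (g (T₀ ω)) ∂P < 0) :
    ∀ᵐ ω ∂P, Tendsto (fun k => (∏ i ∈ Finset.range k, g (T i ω))⁻¹) atTop atTop := by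
  have h := ae_tendsto_prod_atTop_of_integral_log_pos (g := fun b => (g b)⁻¹) hindep hident
    hg.inv (hpos.mono fun _ h => inv_pos.2 h) (by simpa only [log_inv] using hint.fun_neg)
    (by simpa only [log_inv, integral_neg, neg_pos] using hlog)
  simpa only [Finset.prod_inv_distrib] using h

end StrongLaw

/-- The inverse test supermartingale.  Let `T₀` take values in `[0,1]` a.s., let
`0 < μ < 1`, `0 < c < 1`, `θ = (1−c)·μ`, let `T 0, T 1, …` be an i.i.d. sample of `T₀`
(with natural filtration `ℱ`), and let `M k = ∏_{i<k} ((1−c) + c·(1−T i)/(1−μ))`.  Then: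
(i) if `E[T₀] ≤ θ`, then `E[((1−c) + c·(1−T₀)/(1−μ))⁻¹] ≤ 1`, the process `{(M k)⁻¹}` is a
nonnegative supermartingale, and `M k → +∞` a.s.;
(ii) if `E[T₀] ≥ μ` and `P(T₀ = μ) < 1`, then `(M k)⁻¹ → +∞` a.s. -/
theorem inverse_test_supermartingale
    {Ω : Type*} {mΩ : MeasurableSpace Ω} (P : Measure Ω) [IsProbabilityMeasure P]
    (μ : ℝ) (hμ : μ ∈ Set.Ioo (0 : ℝ) 1)
    (c : ℝ) (hc : c ∈ Set.Ioo (0 : ℝ) 1)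
    (θ : ℝ) (hθ : θ = (1 - c) * μ)
    (T₀ : Ω → ℝ) (hT₀int : Integrable T₀ P) (hT₀range : ∀ᵐ ω ∂P, T₀ ω ∈ Set.Icc (0 : ℝ) 1)
    (T : ℕ → Ω → ℝ)
    (hindep : iIndepFun T P)
    (hident : ∀ i, IdentDistrib (T i) T₀ P P)
    (ℱ : Filtration ℕ mΩ)
    (hℱ : ∀ k, ℱ k = ⨆ i ∈ Finset.range k, MeasurableSpace.comap (T i) inferInstance)
    (M : ℕ → Ω → ℝ)
    (hM : ∀ k ω, M k ω = ∏ i ∈ Finset.range k, ((1 - c) + c * (1 - T i ω) / (1 - μ))) :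
    (∫ ω, T₀ ω ∂P ≤ θ →
      (∫ ω, ((1 - c) + c * (1 - T₀ ω) / (1 - μ))⁻¹ ∂P ≤ 1) ∧
      Supermartingale (fun k ω => (M k ω)⁻¹) ℱ P ∧
      (∀ k, ∀ᵐ ω ∂P, 0 ≤ (M k ω)⁻¹) ∧
      (∀ᵐ ω ∂P, Tendsto (fun k => M k ω) atTop atTop)) ∧
    (μ ≤ ∫ ω, T₀ ω ∂P → P {ω | T₀ ω = μ} < 1 →
      ∀ᵐ ω ∂P, Tendsto (fun k => (M k ω)⁻¹) atTop atTop) := by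
  obtain rfl : M = fun k ω => ∏ i ∈ Finset.range k, testFactor μ c (T i ω) := funext₂ hM
  subst hθ
  have hc' : c ∈ Ico 0 1 := Ioo_subset_Ico_self hc
  have hpos : ∀ᵐ ω ∂P, 0 < testFactor μ c (T₀ ω) :=
    hT₀range.mono fun _ h => testFactor_pos hc' hμ.2 h.2
  have hlog_int := integrable_log_testFactor hc' hμ.2 hT₀int.aemeasurable hT₀range
  have hpair : Pairwise fun i j => IndepFun (T i) (T j) P := fun i j hij => hindep.indepFun hij
  have hinvT : ∀ i, IdentDistrib (fun ω => (testFactor μ c (T i ω))⁻¹)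
      (fun ω => (testFactor μ c (T₀ ω))⁻¹) P P :=
    fun i => (hident i).comp (measurable_testFactor μ c).inv
  have hinv_nonneg : ∀ i, ∀ᵐ ω ∂P, 0 ≤ (testFactor μ c (T i ω))⁻¹ := fun i =>
    (hinvT i).symm.ae_snd (measurableSet_le measurable_const measurable_id)
      (hpos.mono fun _ h => (inv_pos.2 h).le)
  refine ⟨fun hET => ⟨integral_inv_testFactor_le_one hc' hμ.2 hT₀int hT₀range hET, ?_, ?_, ?_⟩,
    fun hET hT₀μ => ae_tendsto_inv_prod_atTop_of_integral_log_neg hpair hident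
      (measurable_testFactor μ c) hpos hlog_int
      (integral_log_testFactor_neg hc hμ.2 hT₀int hT₀range hET hT₀μ)⟩
  · simp only [← Finset.prod_inv_distrib]
    exact supermartingale_prod_of_natural hℱ hindep (measurable_testFactor μ c).inv hinv_nonneg
      (fun i => (hinvT i).integrable_iff.2
        (integrable_inv_testFactor hc' hμ.2 hT₀int.aemeasurable hT₀range))
      (fun i => (hinvT i).integral_eq ▸
        integral_inv_testFactor_le_one hc' hμ.2 hT₀int hT₀range hET)
  · refine fun k => (ae_all_iff.2 hinv_nonneg).mono fun _ h => ?_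
    simpa only [Finset.prod_inv_distrib] using Finset.prod_nonneg fun i _ => h i
  · exact ae_tendsto_prod_atTop_of_integral_log_pos hpair hident (measurable_testFactor μ c) hpos
      hlog_int (integral_log_testFactor_pos hc hμ hT₀int hT₀range hET)
end

section
/- Let 0 < μ < 1 and 0 < ν < 1, and let X be a random variable with 0 ≤ X ≤ 1 almost surely such that (E[X] − μ)(ν − μ) ≤ 0. Define g(t, ν, μ) = (ν^t (1−ν)^{1−t})/(μ^t (1−μ)^{1−t}). Then E[g(X, ν, μ)] ≤ 1. Moreover, if ν > μ, then for all t ∈ [0,1], g(t, ν, μ) ≤ ((1−ν)/(1−μ))·(1−t) + (ν/μ)·t, i.e., the Bernoulli likelihood ratio is dominated by the affine factor (1−c) + c·t/μ with c = (ν−μ)/(1−μ). -/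
/-! The likelihood ratio factors as `g(t) = (ν/μ)^t ((1-ν)/(1-μ))^(1-t)`, so on `[0,1]` weighted
AM–GM bounds it by the affine function `(1-t)(1-ν)/(1-μ) + t ν/μ`. Integrating this bound gives
`E[g(X)] - 1 ≤ (E[X] - μ)(ν - μ) / (μ(1-μ)) ≤ 0`. -/

open MeasureTheory

lemma rpow_mul_rpow_div_rpow_mul_rpow {a b c d : ℝ} (ha : 0 ≤ a) (hb : 0 ≤ b) (hc : 0 ≤ c)
    (hd : 0 ≤ d) (t : ℝ) :
    (a ^ t * b ^ (1 - t)) / (c ^ t * d ^ (1 - t)) = (a / c) ^ t * (b / d) ^ (1 - t) := by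
  rw [Real.div_rpow ha hc, Real.div_rpow hb hd, mul_div_mul_comm]

lemma rpow_mul_rpow_div_rpow_mul_rpow_le {a b c d t : ℝ} (ha : 0 ≤ a) (hb : 0 ≤ b) (hc : 0 ≤ c)
    (hd : 0 ≤ d) (ht : t ∈ Set.Icc (0 : ℝ) 1) :
    (a ^ t * b ^ (1 - t)) / (c ^ t * d ^ (1 - t)) ≤ (b / d) * (1 - t) + (a / c) * t := by
  rw [rpow_mul_rpow_div_rpow_mul_rpow ha hb hc hd]
  linarith [Real.geom_mean_le_arith_mean2_weighted ht.1 (sub_nonneg.2 ht.2)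
    (div_nonneg ha hc) (div_nonneg hb hd) (add_sub_cancel t 1)]

lemma integral_affine_of_integrable {Ω : Type*} {mΩ : MeasurableSpace Ω} {P : Measure Ω}
    [IsProbabilityMeasure P] {X : Ω → ℝ} (hX : Integrable X P) (a b : ℝ) :
    ∫ ω, a * (1 - X ω) + b * X ω ∂P = a * (1 - ∫ ω, X ω ∂P) + b * ∫ ω, X ω ∂P := by
  have h1X : Integrable (fun ω => 1 - X ω) P := (integrable_const 1).sub hX
  rw [integral_add (h1X.const_mul a) (hX.const_mul b), integral_const_mul, integral_const_mul,
    integral_sub (integrable_const 1) hX, integral_const, probReal_univ, one_smul]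

lemma bernoulli_affine_factor_sub_one {μ ν : ℝ} (hμ : μ ≠ 0) (hμ' : 1 - μ ≠ 0) (m : ℝ) :
    (1 - ν) / (1 - μ) * (1 - m) + ν / μ * m - 1 = (m - μ) * (ν - μ) / (μ * (1 - μ)) := by
  field_simp
  ring

/-- Let `0 < μ < 1`, `0 < ν < 1`, and let `X` take values in `[0,1]` a.s. with
`(E[X] − μ)(ν − μ) ≤ 0`.  For the Bernoulli likelihood ratio
`g(t) = ν^t (1−ν)^(1−t) / (μ^t (1−μ)^(1−t))` one has `E[g(X)] ≤ 1`; moreover if `ν > μ`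
then `g(t) ≤ ((1−ν)/(1−μ))·(1−t) + (ν/μ)·t` for all `t ∈ [0,1]`, i.e. `g` is dominated by
the affine factor `(1−c) + c·t/μ` with `c = (ν−μ)/(1−μ)`. -/
theorem bernoulli_likelihood_ratio_factor
    {Ω : Type*} {mΩ : MeasurableSpace Ω} (P : Measure Ω) [IsProbabilityMeasure P]
    (μ ν : ℝ) (hμ : μ ∈ Set.Ioo (0 : ℝ) 1) (hν : ν ∈ Set.Ioo (0 : ℝ) 1)
    (X : Ω → ℝ) (hXmeas : Measurable X) (hXrange : ∀ᵐ ω ∂P, X ω ∈ Set.Icc (0 : ℝ) 1)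
    (hXμν : (∫ ω, X ω ∂P - μ) * (ν - μ) ≤ 0) :
    (∫ ω, (ν ^ X ω * (1 - ν) ^ (1 - X ω)) / (μ ^ X ω * (1 - μ) ^ (1 - X ω)) ∂P ≤ 1) ∧
      (μ < ν → ∀ t ∈ Set.Icc (0 : ℝ) 1,
        (ν ^ t * (1 - ν) ^ (1 - t)) / (μ ^ t * (1 - μ) ^ (1 - t)) ≤
          ((1 - ν) / (1 - μ)) * (1 - t) + (ν / μ) * t) := by
  obtain ⟨hμ0, hμ1⟩ := hμ
  obtain ⟨hν0, hν1⟩ := hν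
  have hg_le : ∀ t ∈ Set.Icc (0 : ℝ) 1,
      (ν ^ t * (1 - ν) ^ (1 - t)) / (μ ^ t * (1 - μ) ^ (1 - t)) ≤
        ((1 - ν) / (1 - μ)) * (1 - t) + (ν / μ) * t :=
    fun t ht => rpow_mul_rpow_div_rpow_mul_rpow_le hν0.le (by linarith) hμ0.le (by linarith) ht
  refine ⟨?_, fun _ => hg_le⟩
  have hX : Integrable X P := Integrable.of_bound hXmeas.aestronglyMeasurable 1 <| by
    filter_upwards [hXrange] with ω hω
    rw [Real.norm_eq_abs, abs_of_nonneg hω.1]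
    exact hω.2
  have hdiff : (1 - ν) / (1 - μ) * (1 - ∫ ω, X ω ∂P) + ν / μ * ∫ ω, X ω ∂P - 1 ≤ 0 := by
    rw [bernoulli_affine_factor_sub_one hμ0.ne' (by linarith)]
    exact div_nonpos_of_nonpos_of_nonneg hXμν (by nlinarith)
  calc _ ≤ ∫ ω, (1 - ν) / (1 - μ) * (1 - X ω) + ν / μ * X ω ∂P := by
        refine integral_mono_of_nonneg (Filter.Eventually.of_forall fun ω => by positivity)
          ((((integrable_const 1).sub hX).const_mul _).add (hX.const_mul _)) ?_
        filter_upwards [hXrange] with ω hω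
        exact hg_le (X ω) hω
    _ = (1 - ν) / (1 - μ) * (1 - ∫ ω, X ω ∂P) + ν / μ * ∫ ω, X ω ∂P :=
        integral_affine_of_integrable hX _ _
    _ ≤ 1 := by linarith
end
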